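/- arXiv:2605.16900 — 10 statements merged into one kernel-verified Lean document; each statement's English description precedes it below -/
import Mathlib

section
/- Let h > 0, m ∈ ℝ, and let F : ℝ → ℝ be six times continuously differentiable with |F⁽⁶⁾(z)| ≤ M for all z ∈ ℝ. If ξ is distributed according to N(0,h), then |E[F(m + ξ)] − F(m) − (h/2)·F''(m) − (h²/8)·F⁽⁴⁾(m)| ≤ (M/48)·h³. -/
/-!
Expand `F (m + ·)` around `m` to order five; by Taylor's theorem with the Lagrange remainder the
error is at most `M |x| ^ 6 / 6!`. Integrating against `N(0, h)`, the odd moments vanish and the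
even ones follow from Gaussian integration by parts, `E ξ ^ (k + 2) = (k + 1) h E ξ ^ k`: so
`E ξ² = h`, `E ξ⁴ = 3 h²`, `E ξ⁶ = 15 h³`, which gives the coefficients `h / 2 = h / 2!`,
`h² / 8 = 3 h² / 4!` and the constant `15 / 6! = 1 / 48`.
-/

open MeasureTheory ProbabilityTheory Real Finset
open scoped NNReal Nat

theorem abs_sub_sum_taylor_le {F : ℝ → ℝ} {n : ℕ} {M : ℝ} (hF : ContDiff ℝ (n + 1) F)
    (hbound : ∀ z, |iteratedDeriv (n + 1) F z| ≤ M) (x₀ x : ℝ) :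
    |F x - ∑ k ∈ range (n + 1), iteratedDeriv k F x₀ / k ! * (x - x₀) ^ k|
      ≤ M / (n + 1)! * |x - x₀| ^ (n + 1) := by
  rcases eq_or_ne x₀ x with rfl | hx
  · simp [sum_range_succ']
  obtain ⟨x', -, hx'⟩ := taylor_mean_remainder_lagrange_iteratedDeriv hx hF.contDiffOn
  have htaylor : taylorWithinEval F n (Set.uIcc x₀ x) x₀ x
      = ∑ k ∈ range (n + 1), iteratedDeriv k F x₀ / k ! * (x - x₀) ^ k := by
    rw [taylor_within_apply]
    refine sum_congr rfl fun k hk => ?_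
    rw [iteratedDerivWithin_eq_iteratedDeriv (uniqueDiffOn_uIcc hx)
      (hF.contDiffAt.of_le (by exact_mod_cast (mem_range.mp hk).le)) Set.left_mem_uIcc,
      smul_eq_mul]
    ring
  rw [← htaylor, hx', abs_div, abs_mul, abs_pow, Nat.abs_cast, div_mul_eq_mul_div]
  gcongr
  exact hbound x'

theorem abs_integral_comp_add_sub_sum_taylor_le {μ : Measure ℝ} {F : ℝ → ℝ} {n : ℕ}
    {M : ℝ} (hμ : ∀ k ≤ n + 1, Integrable (fun x => |x| ^ k) μ) (hF : ContDiff ℝ (n + 1) F)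
    (hbound : ∀ z, |iteratedDeriv (n + 1) F z| ≤ M) (m : ℝ) :
    |∫ x, F (m + x) ∂μ - ∑ k ∈ range (n + 1), iteratedDeriv k F m / k ! * ∫ x, x ^ k ∂μ|
      ≤ M / (n + 1)! * ∫ x, |x| ^ (n + 1) ∂μ := by
  set P : ℝ → ℝ := fun x => ∑ k ∈ range (n + 1), iteratedDeriv k F m / k ! * x ^ k
  have hpow : ∀ k ∈ range (n + 1),
      Integrable (fun x => iteratedDeriv k F m / k ! * x ^ k) μ := fun k hk =>
    ((hμ k (by simp at hk; omega)).mono' (by fun_prop) (.of_forall fun x => by simp)).const_mul _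
  have hR : ∀ x, ‖F (m + x) - P x‖ ≤ M / (n + 1)! * |x| ^ (n + 1) := fun x => by
    simpa using abs_sub_sum_taylor_le hF hbound m (m + x)
  have hRint : Integrable (fun x => F (m + x) - P x) μ :=
    ((hμ (n + 1) le_rfl).const_mul _).mono'
      ((hF.continuous.comp (continuous_const_add m)).sub (by fun_prop)).aestronglyMeasurable
      (.of_forall hR)
  have hsplit : ∫ x, F (m + x) ∂μ = ∫ x, P x ∂μ + ∫ x, F (m + x) - P x ∂μ := by
    rw [← integral_add (integrable_finsetSum _ hpow) hRint]
    simp [P]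
  rw [hsplit, integral_finsetSum _ hpow]
  simp only [integral_const_mul, add_sub_cancel_left]
  rw [← integral_const_mul, ← Real.norm_eq_abs]
  exact norm_integral_le_of_norm_le ((hμ (n + 1) le_rfl).const_mul _) (.of_forall hR)

theorem integrable_pow_mul_exp_neg_mul_sq {b : ℝ} (hb : 0 < b) (n : ℕ) :
    Integrable fun x : ℝ => x ^ n * exp (-b * x ^ 2) := by
  simpa using integrable_rpow_mul_exp_neg_mul_sq hb (s := n)
    (by linarith [n.cast_nonneg (α := ℝ)])

theorem integral_pow_add_two_mul_exp_neg_mul_sq {b : ℝ} (hb : 0 < b) (n : ℕ) :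
    ∫ x, x ^ (n + 2) * exp (-b * x ^ 2)
      = (n + 1) / (2 * b) * ∫ x, x ^ n * exp (-b * x ^ 2) := by
  have hderiv : ∀ x : ℝ, HasDerivAt (fun x => x ^ (n + 1) * exp (-b * x ^ 2))
      ((n + 1) * (x ^ n * exp (-b * x ^ 2)) - 2 * b * (x ^ (n + 2) * exp (-b * x ^ 2))) x := by
    intro x
    refine ((hasDerivAt_pow (n + 1) x).fun_mul
      ((hasDerivAt_pow 2 x).const_mul (-b)).exp).congr_deriv ?_
    rw [Nat.add_sub_cancel]
    push_cast
    ring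
  have hint := integrable_pow_mul_exp_neg_mul_sq hb
  have hzero := integral_eq_zero_of_hasDerivAt_of_integrable hderiv
    (((hint n).const_mul _).sub ((hint (n + 2)).const_mul _)) (hint (n + 1))
  rw [integral_sub ((hint n).const_mul _) ((hint (n + 2)).const_mul _), integral_const_mul,
    integral_const_mul, sub_eq_zero] at hzero
  rw [div_mul_eq_mul_div, eq_div_iff (by positivity)]
  linarith

theorem integral_pow_add_two_gaussianReal (v : ℝ≥0) (n : ℕ) :
    ∫ x, x ^ (n + 2) ∂gaussianReal 0 v = (n + 1) * v * ∫ x, x ^ n ∂gaussianReal 0 v := by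
  rcases eq_or_ne v 0 with rfl | hv
  · simp [gaussianReal_zero_var]
  have hdensity : ∀ k : ℕ, ∫ x, x ^ k ∂gaussianReal 0 v
      = (√(2 * π * v))⁻¹ * ∫ x, x ^ k * exp (-(2 * v : ℝ)⁻¹ * x ^ 2) := fun k => by
    rw [integral_gaussianReal_eq_integral_smul hv, ← integral_const_mul]
    congr with x
    simp only [gaussianPDFReal, smul_eq_mul, sub_zero]
    rw [neg_div, div_eq_inv_mul, neg_mul]
    ring
  rw [hdensity, hdensity, integral_pow_add_two_mul_exp_neg_mul_sq (by positivity)]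
  field_simp

-- At `k = 0` the truncated `0 - 1 = 0` gives the correct `0‼ = 1`.
theorem integral_pow_gaussianReal (v : ℝ≥0) (k : ℕ) :
    ∫ x, x ^ k ∂gaussianReal 0 v = if Even k then (v : ℝ) ^ (k / 2) * (k - 1)‼ else 0 := by
  induction k using Nat.twoStepInduction with
  | zero => simp
  | one => simp
  | more k ih _ =>
    rw [integral_pow_add_two_gaussianReal, ih]
    by_cases hk : Even k
    · rw [if_pos hk, if_pos (hk.add even_two), Nat.add_div_right k two_pos,
        show k + 2 - 1 = k + 1 by omega, Nat.doubleFactorial_add_one]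
      push_cast
      ring
    · simp [hk, Nat.even_add]

/-- Sixth-order Gaussian expectation expansion with explicit remainder bound:
for a six times continuously differentiable `F` with sixth derivative bounded by `M`,
and `ξ ~ N(0,h)`,
`|E[F(m+ξ)] − F(m) − (h/2) F''(m) − (h²/8) F⁗(m)| ≤ (M/48) h³`. -/
theorem gaussian_expectation_expansion
    (h : ℝ) (hh : 0 < h) (m M : ℝ) (F : ℝ → ℝ)
    (hF : ContDiff ℝ 6 F)
    (hbound : ∀ z : ℝ, |iteratedDeriv 6 F z| ≤ M) :
    |(∫ z, F (m + z) ∂(gaussianReal 0 h.toNNReal))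
        - F m - (h / 2) * iteratedDeriv 2 F m - (h ^ 2 / 8) * iteratedDeriv 4 F m|
      ≤ (M / 48) * h ^ 3 := by
  have hmoments : ∀ k : ℕ, Integrable (fun x => |x| ^ k) (gaussianReal 0 h.toNNReal) :=
    fun k => (memLp_id_gaussianReal k).integrable_norm_pow'
  have key := abs_integral_comp_add_sub_sum_taylor_le (n := 5) (fun k _ => hmoments k)
    hF hbound m
  simp only [(by decide : Even 6).pow_abs, integral_pow_gaussianReal, sum_range_succ,
    Real.coe_toNNReal h hh.le] at key
  norm_num [Nat.factorial, Nat.doubleFactorial] at key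
  convert key using 1 <;> ring_nf
end

section
/- Let θ, μ, b > 0 with φ_h(x) ≥ 0, let h > 0 and ξ ~ N(0,h). Then the one-step LT scheme for the CIR process satisfies E[X^{LT}] = μ̃ + e^{−θh}(x − μ̃) + θbh/2. Consequently the one-step bias E[X^{LT}] − (μ + e^{−θh}(x − μ)) equals (b/2)(θh − 1 + e^{−θh}), which is independent of x and satisfies 0 ≤ (b/2)(θh − 1 + e^{−θh}) ≤ (bθ²/4)h², so the LT conditional-mean bias is of order h². -/
open MeasureTheory ProbabilityTheory

/-! Since `E[(a + kZ)²] = (a + k E Z)² + k² Var Z`, the scheme has mean `φ_h(x) + θbh/2`. The bias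
`(b/2)(t - 1 + e^{-t})`, `t = θh`, is then controlled by `1 - t ≤ e^{-t} ≤ 1 - t + t²/2` for `t ≥ 0`. -/

/-- `μ̃ = μ − b/2` for the CIR splitting. -/
noncomputable def cirMuTilde (μ b : ℝ) : ℝ := μ - b / 2

/-- Exact flow `φ_h(x) = μ̃ + e^{−θh}(x − μ̃)` of the deterministic CIR subequation. -/
noncomputable def cirPhi (θ μ b h x : ℝ) : ℝ :=
  cirMuTilde μ b + Real.exp (-θ * h) * (x - cirMuTilde μ b)

/-- One-step Lie–Trotter scheme for the CIR process started at `x`, with Gaussian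
increment `z`. -/
noncomputable def cirLT (θ μ b h x z : ℝ) : ℝ :=
  (Real.sqrt (cirPhi θ μ b h x) + (Real.sqrt (2 * θ * b) / 2) * z) ^ 2

open Real

lemma integral_const_add_mul_sq {Ω : Type*} [MeasurableSpace Ω] {P : Measure Ω}
    [IsProbabilityMeasure P] {X : Ω → ℝ} (hX : MemLp X 2 P) (a k : ℝ) :
    ∫ ω, (a + k * X ω) ^ 2 ∂P = (a + k * P[X]) ^ 2 + k ^ 2 * Var[X; P] := by
  have hY : MemLp (fun ω ↦ a + k * X ω) 2 P := (memLp_const a).add (hX.const_mul k)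
  have hvar : Var[fun ω ↦ a + k * X ω; P] = k ^ 2 * Var[X; P] := by
    rw [variance_const_add (hX.const_mul k).aestronglyMeasurable, variance_const_mul]
  have hmean : P[fun ω ↦ a + k * X ω] = a + k * P[X] := by
    rw [integral_add (integrable_const a) ((hX.integrable one_le_two).const_mul k),
      integral_const_mul, integral_const, probReal_univ, one_smul]
  have hsecond := variance_eq_sub hY
  rw [hvar, hmean] at hsecond
  simp only [Pi.pow_apply] at hsecond
  linarith

lemma integral_const_add_mul_sq_gaussianReal (m : ℝ) (v : NNReal) (a k : ℝ) :
    ∫ z, (a + k * z) ^ 2 ∂gaussianReal m v = (a + k * m) ^ 2 + k ^ 2 * v := by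
  simpa [integral_id_gaussianReal, variance_id_gaussianReal] using
    integral_const_add_mul_sq (memLp_id_gaussianReal (μ := m) (v := v) 2) a k

lemma integral_cirLT_gaussianReal {θ μ b h x : ℝ} (hθb : 0 ≤ θ * b) (hh : 0 ≤ h)
    (hφ : 0 ≤ cirPhi θ μ b h x) :
    ∫ z, cirLT θ μ b h x z ∂gaussianReal 0 h.toNNReal = cirPhi θ μ b h x + θ * b * h / 2 := by
  simp only [cirLT, integral_const_add_mul_sq_gaussianReal, Real.coe_toNNReal h hh, mul_zero,
    add_zero, div_pow, Real.sq_sqrt hφ, Real.sq_sqrt (by linarith : 0 ≤ 2 * θ * b)]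
  ring

lemma exp_neg_le_one_sub_add_sq_div_two {t : ℝ} (ht : 0 ≤ t) :
    exp (-t) ≤ 1 - t + t ^ 2 / 2 := by
  -- `(1 + t + t²/2)(1 - t + t²/2) = 1 + t⁴/4` and `1 + t + t²/2 ≤ exp t`
  have hq := quadratic_le_exp_of_nonneg ht
  have hinv : exp (-t) * exp t = 1 := by rw [← exp_add, neg_add_cancel, exp_zero]
  nlinarith [exp_pos (-t), sq_nonneg (1 - t), pow_nonneg ht 4]

theorem cir_LT_one_step_mean_general
    (θ μ b h x : ℝ) (hθ : 0 < θ) (hb : 0 < b) (hh : 0 < h)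
    (hφ : 0 ≤ cirPhi θ μ b h x) :
    (∫ z, cirLT θ μ b h x z ∂(gaussianReal 0 h.toNNReal))
        = cirMuTilde μ b + Real.exp (-θ * h) * (x - cirMuTilde μ b) + θ * b * h / 2
      ∧ (∫ z, cirLT θ μ b h x z ∂(gaussianReal 0 h.toNNReal))
          - (μ + Real.exp (-θ * h) * (x - μ))
        = (b / 2) * (θ * h - 1 + Real.exp (-θ * h))
      ∧ 0 ≤ (b / 2) * (θ * h - 1 + Real.exp (-θ * h))
      ∧ (b / 2) * (θ * h - 1 + Real.exp (-θ * h)) ≤ (b * θ ^ 2 / 4) * h ^ 2 := by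
  have hmean := integral_cirLT_gaussianReal (mul_pos hθ hb).le hh.le hφ
  have hlower : 0 ≤ θ * h - 1 + exp (-θ * h) := by
    linarith [add_one_le_exp (-θ * h)]
  have hupper : θ * h - 1 + exp (-θ * h) ≤ (θ * h) ^ 2 / 2 := by
    linarith [neg_mul θ h ▸ exp_neg_le_one_sub_add_sq_div_two (mul_pos hθ hh).le]
  refine ⟨hmean, ?_, by positivity, ?_⟩
  · rw [hmean, cirPhi, cirMuTilde]
    ring
  · calc (b / 2) * (θ * h - 1 + exp (-θ * h)) ≤ (b / 2) * ((θ * h) ^ 2 / 2) := by gcongr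
      _ = (b * θ ^ 2 / 4) * h ^ 2 := by ring

/-- One-step conditional mean of the CIR Lie–Trotter scheme: it equals
`μ̃ + e^{−θh}(x − μ̃) + θbh/2`; the bias against the exact CIR conditional mean
`μ + e^{−θh}(x − μ)` is `(b/2)(θh − 1 + e^{−θh})`, independent of `x`,
nonnegative, and bounded by `(bθ²/4)h²`. -/
theorem cir_LT_one_step_mean
    (θ μ b h x : ℝ) (hθ : 0 < θ) (hμ : 0 < μ) (hb : 0 < b) (hh : 0 < h)
    (hφ : 0 ≤ cirPhi θ μ b h x) :
    (∫ z, cirLT θ μ b h x z ∂(gaussianReal 0 h.toNNReal))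
        = cirMuTilde μ b + Real.exp (-θ * h) * (x - cirMuTilde μ b) + θ * b * h / 2
      ∧ (∫ z, cirLT θ μ b h x z ∂(gaussianReal 0 h.toNNReal))
          - (μ + Real.exp (-θ * h) * (x - μ))
        = (b / 2) * (θ * h - 1 + Real.exp (-θ * h))
      ∧ 0 ≤ (b / 2) * (θ * h - 1 + Real.exp (-θ * h))
      ∧ (b / 2) * (θ * h - 1 + Real.exp (-θ * h)) ≤ (b * θ ^ 2 / 4) * h ^ 2 :=
  cir_LT_one_step_mean_general θ μ b h x hθ hb hh hφ
end

section
/- Let θ, μ, b > 0, h > 0 with φ_{h/2}(x) ≥ 0, and ξ ~ N(0,h). Then the one-step Strang scheme for the CIR process satisfies E[X^{S}] = μ̃ + e^{−θh}(x − μ̃) + (θbh/2)·e^{−θh/2}. Consequently the one-step bias E[X^{S}] − (μ + e^{−θh}(x − μ)) equals (b/2)(θh·e^{−θh/2} − 1 + e^{−θh}), which is independent of x and satisfies |(b/2)(θh·e^{−θh/2} − 1 + e^{−θh})| ≤ (bθ³/24)·h³ for all h ∈ (0, 1/θ], so the Strang conditional-mean bias is of order h³. -/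
/-!
For `ξ ~ N(0, h)`, `E[(√φ_{h/2}(x) + (√(2θb)/2) ξ)²] = φ_{h/2}(x) + θbh/2`. The scheme applies the
affine flow `φ_{h/2}` to this square, so its mean is
`φ_{h/2}(φ_{h/2}(x) + θbh/2) = φ_h(x) + e^{-θh/2} θbh/2`.

For the bias put `t = θh` and `u = e^{-t/2}`. Then `e^{-t} = u²`, so the bias is
`(b/2)(u² + tu - 1)`, increasing in `u ≥ -t/2`, and the Taylor bounds
`1 - s + s²/2 - s³/6 ≤ e^{-s} ≤ 1 - s + s²/2` at `s = t/2` confine `u² + tu - 1` to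
`[-t³/24, t⁴/64]`.
-/

open MeasureTheory ProbabilityTheory

/-- One-step Strang splitting scheme for the CIR process started at `x`, with Gaussian
increment `z`:
`X^S = μ̃ + e^{−θh/2}((√(φ_{h/2}(x)) + (√(2θb)/2) z)² − μ̃)`. -/
noncomputable def cirStrang (θ μ b h x z : ℝ) : ℝ :=
  cirMuTilde μ b + Real.exp (-θ * h / 2) *
    ((Real.sqrt (cirPhi θ μ b (h / 2) x) + (Real.sqrt (2 * θ * b) / 2) * z) ^ 2
      - cirMuTilde μ b)

open Real
open scoped NNReal

section GaussianMoments

variable (μ : ℝ) (v : ℝ≥0)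

lemma integral_sq_gaussianReal : ∫ x, x ^ 2 ∂gaussianReal μ v = μ ^ 2 + v := by
  have hvar := variance_id_gaussianReal (μ := μ) (v := v)
  rw [variance_eq_sub (memLp_id_gaussianReal 2)] at hvar
  simp only [Pi.pow_apply, id_eq, integral_id_gaussianReal] at hvar
  linarith

lemma integral_quadratic_gaussianReal (c₀ c₁ c₂ : ℝ) :
    ∫ z, c₀ + c₁ * z + c₂ * z ^ 2 ∂gaussianReal μ v = c₀ + c₁ * μ + c₂ * (μ ^ 2 + v) := by
  have hid : Integrable (fun z : ℝ ↦ z) (gaussianReal μ v) :=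
    (memLp_id_gaussianReal 1).integrable le_rfl
  have hsq : Integrable (fun z : ℝ ↦ z ^ 2) (gaussianReal μ v) :=
    (memLp_id_gaussianReal 2).integrable_sq
  rw [integral_add ((integrable_const c₀).fun_add (hid.const_mul c₁)) (hsq.const_mul c₂),
    integral_add (integrable_const c₀) (hid.const_mul c₁),
    integral_const_mul, integral_const_mul, integral_const, integral_id_gaussianReal,
    integral_sq_gaussianReal]
  simp

end GaussianMoments

lemma apply_zero_le_of_hasDerivAt_nonneg {f f' : ℝ → ℝ} (hf : ∀ t, HasDerivAt f (f' t) t)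
    (hf' : ∀ t, 0 ≤ t → 0 ≤ f' t) {x : ℝ} (hx : 0 ≤ x) : f 0 ≤ f x :=
  monotoneOn_of_hasDerivWithinAt_nonneg (convex_Ici 0)
    (fun t _ ↦ (hf t).continuousAt.continuousWithinAt) (fun t _ ↦ (hf t).hasDerivWithinAt)
    (fun t ht ↦ hf' t (interior_subset ht)) Set.self_mem_Ici hx hx

lemma exp_neg_le_quadratic_of_nonneg {x : ℝ} (hx : 0 ≤ x) : exp (-x) ≤ 1 - x + x ^ 2 / 2 := by
  have key := apply_zero_le_of_hasDerivAt_nonneg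
    (f := fun t ↦ 1 - t + t ^ 2 / 2 - exp (-t)) (f' := fun t ↦ t - 1 + exp (-t))
    (fun t ↦ ((((hasDerivAt_id t).const_sub 1).add ((hasDerivAt_pow 2 t).div_const 2)).sub
      (hasDerivAt_neg t).exp).congr_deriv (by push_cast; ring))
    (fun t _ ↦ by linarith [add_one_le_exp (-t)]) hx
  simp only [neg_zero, exp_zero] at key
  linarith

lemma cubic_le_exp_neg_of_nonneg {x : ℝ} (hx : 0 ≤ x) :
    1 - x + x ^ 2 / 2 - x ^ 3 / 6 ≤ exp (-x) := by
  have key := apply_zero_le_of_hasDerivAt_nonneg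
    (f := fun t ↦ exp (-t) - (1 - t + t ^ 2 / 2 - t ^ 3 / 6))
    (f' := fun t ↦ 1 - t + t ^ 2 / 2 - exp (-t))
    (fun t ↦ ((hasDerivAt_neg t).exp.sub ((((hasDerivAt_id t).const_sub 1).add
      ((hasDerivAt_pow 2 t).div_const 2)).sub ((hasDerivAt_pow 3 t).div_const 6))).congr_deriv
      (by push_cast; ring))
    (fun t ht ↦ by linarith [exp_neg_le_quadratic_of_nonneg ht]) hx
  simp only [neg_zero, exp_zero] at key
  linarith

lemma abs_mul_exp_neg_half_sub_one_add_exp_neg_le {t : ℝ} (h0 : 0 ≤ t) (h2 : t ≤ 2) :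
    |t * exp (-t / 2) - 1 + exp (-t)| ≤ t ^ 3 / 24 := by
  obtain ⟨s, rfl⟩ : ∃ s, t = 2 * s := ⟨t / 2, by ring⟩
  have hs0 : 0 ≤ s := by linarith
  have hs1 : s ≤ 1 := by linarith
  have hhalf : -(2 * s) / 2 = -s := by ring
  have hsq : exp (-(2 * s)) = exp (-s) ^ 2 := by rw [← exp_nat_mul]; ring_nf
  have hU := exp_neg_le_quadratic_of_nonneg hs0
  have hL := cubic_le_exp_neg_of_nonneg hs0
  have hs4 : s ^ 4 ≤ s ^ 3 := pow_le_pow_of_le_one hs0 hs1 (by norm_num)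
  rw [hhalf, hsq, abs_le]
  set u := exp (-s)
  have hpos : 0 < u := exp_pos (-s)
  have hmono : ∀ {p q : ℝ}, p ≤ q → 0 ≤ p + q + 2 * s →
      p ^ 2 + 2 * s * p ≤ q ^ 2 + 2 * s * q := fun hpq hsum ↦ by
    nlinarith [mul_nonneg (sub_nonneg.mpr hpq) hsum]
  constructor
  · have := hmono hL (by nlinarith)
    nlinarith
  · have := hmono hU (by nlinarith)
    nlinarith

lemma cirPhi_cirPhi (θ μ b s t x : ℝ) :
    cirPhi θ μ b s (cirPhi θ μ b t x) = cirPhi θ μ b (s + t) x := by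
  simp only [cirPhi, mul_add, exp_add]
  ring

lemma integral_cirStrang_gaussianReal (θ μ b h x : ℝ) (hθb : 0 ≤ θ * b) (hh : 0 ≤ h)
    (hφ : 0 ≤ cirPhi θ μ b (h / 2) x) :
    ∫ z, cirStrang θ μ b h x z ∂gaussianReal 0 h.toNNReal
      = cirPhi θ μ b h x + (θ * b * h / 2) * exp (-θ * h / 2) := by
  set a := √(cirPhi θ μ b (h / 2) x)
  set k := √(2 * θ * b) / 2
  have ha : a ^ 2 = cirPhi θ μ b (h / 2) x := sq_sqrt hφ
  have hk : k ^ 2 = θ * b / 2 := by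
    rw [div_pow, sq_sqrt (by linarith)]
    ring
  have hquad : (fun z ↦ cirStrang θ μ b h x z) = fun z ↦
      cirMuTilde μ b + exp (-θ * h / 2) * (a ^ 2 - cirMuTilde μ b)
        + 2 * exp (-θ * h / 2) * a * k * z + exp (-θ * h / 2) * k ^ 2 * z ^ 2 := by
    ext z
    simp only [cirStrang]
    ring
  have hflow : cirPhi θ μ b h x = cirPhi θ μ b (h / 2) (cirPhi θ μ b (h / 2) x) := by
    rw [cirPhi_cirPhi, add_halves]
  rw [hquad, integral_quadratic_gaussianReal, Real.coe_toNNReal h hh, ha, hk, hflow]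
  generalize cirPhi θ μ b (h / 2) x = y
  simp only [cirPhi, mul_div_assoc]
  ring

theorem cir_Strang_one_step_mean_general
    (θ μ b h x : ℝ) (hθ : 0 < θ) (hb : 0 < b) (hh : 0 < h)
    (hφ : 0 ≤ cirPhi θ μ b (h / 2) x) :
    (∫ z, cirStrang θ μ b h x z ∂(gaussianReal 0 h.toNNReal))
        = cirMuTilde μ b + Real.exp (-θ * h) * (x - cirMuTilde μ b)
            + (θ * b * h / 2) * Real.exp (-θ * h / 2)
      ∧ (∫ z, cirStrang θ μ b h x z ∂(gaussianReal 0 h.toNNReal))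
          - (μ + Real.exp (-θ * h) * (x - μ))
        = (b / 2) * (θ * h * Real.exp (-θ * h / 2) - 1 + Real.exp (-θ * h))
      ∧ (h ≤ 1 / θ →
          |(b / 2) * (θ * h * Real.exp (-θ * h / 2) - 1 + Real.exp (-θ * h))|
            ≤ (b * θ ^ 3 / 24) * h ^ 3) := by
  have hmean := integral_cirStrang_gaussianReal θ μ b h x (by positivity) hh.le hφ
  refine ⟨hmean, ?_, fun hle ↦ ?_⟩
  · rw [hmean]
    simp only [cirPhi, cirMuTilde]
    ring
  · have hθh : θ * h ≤ 1 := by rwa [le_div_iff₀ hθ, mul_comm] at hle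
    have hbias := abs_mul_exp_neg_half_sub_one_add_exp_neg_le (by positivity) (hθh.trans one_le_two)
    rw [← neg_mul] at hbias
    calc |b / 2 * (θ * h * exp (-θ * h / 2) - 1 + exp (-θ * h))|
        = b / 2 * |θ * h * exp (-θ * h / 2) - 1 + exp (-θ * h)| := by
          rw [abs_mul, abs_of_pos (half_pos hb)]
      _ ≤ b / 2 * ((θ * h) ^ 3 / 24) := by gcongr
      _ ≤ b * θ ^ 3 / 24 * h ^ 3 := by
          have : 0 ≤ b * (θ * h) ^ 3 := by positivity
          nlinarith

/-- One-step conditional mean of the CIR Strang scheme: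
it equals `μ̃ + e^{−θh}(x − μ̃) + (θbh/2)e^{−θh/2}`; the bias against the exact
CIR conditional mean `μ + e^{−θh}(x − μ)` is `(b/2)(θh e^{−θh/2} − 1 + e^{−θh})`,
independent of `x`, and of absolute size at most `(bθ³/24)h³` for `h ∈ (0, 1/θ]`. -/
theorem cir_Strang_one_step_mean
    (θ μ b h x : ℝ) (hθ : 0 < θ) (hμ : 0 < μ) (hb : 0 < b) (hh : 0 < h)
    (hφ : 0 ≤ cirPhi θ μ b (h / 2) x) :
    (∫ z, cirStrang θ μ b h x z ∂(gaussianReal 0 h.toNNReal))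
        = cirMuTilde μ b + Real.exp (-θ * h) * (x - cirMuTilde μ b)
            + (θ * b * h / 2) * Real.exp (-θ * h / 2)
      ∧ (∫ z, cirStrang θ μ b h x z ∂(gaussianReal 0 h.toNNReal))
          - (μ + Real.exp (-θ * h) * (x - μ))
        = (b / 2) * (θ * h * Real.exp (-θ * h / 2) - 1 + Real.exp (-θ * h))
      ∧ (h ≤ 1 / θ →
          |(b / 2) * (θ * h * Real.exp (-θ * h / 2) - 1 + Real.exp (-θ * h))|
            ≤ (b * θ ^ 3 / 24) * h ^ 3) :=
  cir_Strang_one_step_mean_general θ μ b h x hθ hb hh hφ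
end

section
/- Let θ > 0, b > 0, μ ≥ b, h > 0, x₀ ≥ 0, and let ξ₀, ξ₁, … be i.i.d. random variables with law N(0,h). Define the LT chain by X₀ = x₀ and X_{k+1} = (√(φ_h(X_k)) + (√(2θb)/2)ξ_k)² (which is well defined since φ_h(y) > 0 for every y ≥ 0). Then for every n ≥ 1, E[X_n] = e^{−θnh}x₀ + μ̃(1 − e^{−θnh}) + (θbh/2)·(1 − e^{−θnh})/(1 − e^{−θh}). -/
open MeasureTheory ProbabilityTheory

open scoped ENNReal NNReal

/-! Since `X_k` is a measurable function of `ξ_0, …, ξ_{k-1}`, it is independent of the centred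
increment `ξ_k`, so expanding the square in the Lie–Trotter step kills the cross term and
`E[X_{k+1}] = E[φ_h(X_k)] + θbh/2`. As `φ_h` is affine, `E[φ_h(X_k)] = φ_h(E[X_k])`, and the
affine recurrence `E[X_{k+1}] = e^{−θh} E[X_k] + (1 − e^{−θh}) μ̃ + θbh/2` solves to the formula. -/

section GaussianMoments

variable {Ω : Type*} {mΩ : MeasurableSpace Ω} {P : Measure Ω} {ξ : Ω → ℝ} {v : ℝ≥0}

lemma ProbabilityTheory.HasLaw.memLp_of_gaussianReal {m : ℝ}
    (hξ : HasLaw ξ (gaussianReal m v) P) {p : ℝ≥0∞} (hp : p ≠ ∞) : MemLp ξ p P := by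
  have := memLp_id_gaussianReal' (μ := m) (v := v) p hp
  rw [← hξ.map_eq] at this
  exact (memLp_map_measure_iff (by rw [hξ.map_eq]; fun_prop) hξ.aemeasurable).1 this

lemma ProbabilityTheory.HasLaw.integral_sq_of_gaussianReal
    (hξ : HasLaw ξ (gaussianReal 0 v) P) : ∫ ω, ξ ω ^ 2 ∂P = v := by
  rw [← variance_of_integral_eq_zero hξ.aemeasurable
    (hξ.integral_eq.trans integral_id_gaussianReal), hξ.variance_eq, variance_id_gaussianReal]

end GaussianMoments

section SquaredNoisyStep

variable {Ω : Type*} {mΩ : MeasurableSpace Ω} {P : Measure Ω} {Y ξ : Ω → ℝ}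

lemma memLp_two_sqrt_add_mul (hY : Integrable Y P) (hY0 : 0 ≤ᵐ[P] Y) (hξ : MemLp ξ 2 P)
    (c : ℝ) : MemLp (fun ω => √(Y ω) + c * ξ ω) 2 P := by
  have hsqrt : MemLp (fun ω => √(Y ω)) 2 P := by
    refine (memLp_two_iff_integrable_sq
      (Real.continuous_sqrt.comp_aestronglyMeasurable hY.aestronglyMeasurable)).2 ?_
    refine hY.congr ?_
    filter_upwards [hY0] with ω hω using (Real.sq_sqrt hω).symm
  exact hsqrt.add (hξ.const_mul c)

lemma integral_sq_sqrt_add_mul (hY : Integrable Y P) (hY0 : 0 ≤ᵐ[P] Y) (hξ : MemLp ξ 2 P)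
    (hξ0 : P[ξ] = 0) (hind : IndepFun Y ξ P) (c : ℝ) :
    ∫ ω, (√(Y ω) + c * ξ ω) ^ 2 ∂P = P[Y] + c ^ 2 * ∫ ω, ξ ω ^ 2 ∂P := by
  have hsqrt : MemLp (fun ω => √(Y ω)) 2 P := by
    simpa using memLp_two_sqrt_add_mul hY hY0 hξ 0
  have hexpand : (fun ω => (√(Y ω) + c * ξ ω) ^ 2)
      =ᵐ[P] fun ω => Y ω + 2 * c * (√(Y ω) * ξ ω) + c ^ 2 * ξ ω ^ 2 := by
    filter_upwards [hY0] with ω hω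
    rw [add_sq, mul_pow, Real.sq_sqrt hω]
    ring
  have hprod : Integrable (fun ω => √(Y ω) * ξ ω) P := hsqrt.integrable_mul hξ
  have hcross : ∫ ω, √(Y ω) * ξ ω ∂P = 0 := by
    have hind' : IndepFun (fun ω => √(Y ω)) ξ P :=
      hind.comp Real.continuous_sqrt.measurable measurable_id
    rw [hind'.integral_fun_mul_eq_mul_integral hsqrt.aestronglyMeasurable
      hξ.aestronglyMeasurable, hξ0, mul_zero]
  rw [integral_congr_ae hexpand, integral_add (hY.fun_add (hprod.const_mul _))
    (hξ.integrable_sq.const_mul _), integral_add hY (hprod.const_mul _),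
    integral_const_mul, integral_const_mul, hcross]
  ring

end SquaredNoisyStep

section NoiseDrivenRecursion

variable {Ω β γ : Type*} {mΩ : MeasurableSpace Ω} {mβ : MeasurableSpace β}
  {mγ : MeasurableSpace γ} {ξ : ℕ → Ω → β} {X : ℕ → Ω → γ} {g : γ → β → γ} {x₀ : γ}

lemma measurable_iSup_comap_Iio_of_recursion (hg : Measurable (Function.uncurry g))
    (hX0 : ∀ ω, X 0 ω = x₀) (hstep : ∀ k ω, X (k + 1) ω = g (X k ω) (ξ k ω)) (k : ℕ) :
    Measurable[⨆ i ∈ Set.Iio k, mβ.comap (ξ i)] (X k) := by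
  induction k with
  | zero => rw [show X 0 = fun _ => x₀ from funext hX0]; exact measurable_const
  | succ k ih =>
    rw [show X (k + 1) = fun ω => Function.uncurry g (X k ω, ξ k ω) from funext (hstep k)]
    refine hg.comp (Measurable.prodMk ?_ ?_)
    · exact ih.mono (biSup_mono fun i hi => Nat.lt_succ_of_lt hi) le_rfl
    · exact (comap_measurable (ξ k)).mono
        (le_iSup₂ (f := fun i (_ : i ∈ Set.Iio (k + 1)) => mβ.comap (ξ i)) k k.lt_succ_self)
        le_rfl

lemma indepFun_of_recursion {P : Measure Ω} (hmeas : ∀ k, Measurable (ξ k))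
    (hindep : iIndepFun ξ P) (hg : Measurable (Function.uncurry g))
    (hX0 : ∀ ω, X 0 ω = x₀) (hstep : ∀ k ω, X (k + 1) ω = g (X k ω) (ξ k ω)) (k : ℕ) :
    IndepFun (X k) (ξ k) P := by
  have hpast_future := indep_iSup_of_disjoint (fun i => (hmeas i).comap_le)
    ((iIndepFun_iff_iIndep _ _ _).1 hindep) (S := Set.Iio k) (T := {k}) (by simp)
  rw [IndepFun_iff_Indep]
  refine indep_of_indep_of_le_right (indep_of_indep_of_le_left hpast_future
    (measurable_iSup_comap_Iio_of_recursion hg hX0 hstep k).comap_le) ?_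
  exact le_iSup₂ (f := fun i (_ : i ∈ ({k} : Set ℕ)) => mβ.comap (ξ i)) k rfl

end NoiseDrivenRecursion

lemma eq_pow_mul_add_of_affine_recurrence {K : Type*} [Field K] {a : ℕ → K} {α β : K}
    (hα : α ≠ 1) (h : ∀ k, a (k + 1) = α * a k + β) (n : ℕ) :
    a n = α ^ n * a 0 + β * (1 - α ^ n) / (1 - α) := by
  have hα' : 1 - α ≠ 0 := sub_ne_zero.2 hα.symm
  induction n with
  | zero => simp
  | succ n ih =>
    rw [h, ih]
    field_simp
    ring

section CIR

variable {θ μ b h : ℝ}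

lemma cirPhi_eq (x : ℝ) :
    cirPhi θ μ b h x = Real.exp (-θ * h) * x + (1 - Real.exp (-θ * h)) * cirMuTilde μ b := by
  unfold cirPhi
  ring

lemma measurable_cirPhi : Measurable (cirPhi θ μ b h) := by
  unfold cirPhi
  fun_prop

lemma cirPhi_nonneg (hθ : 0 ≤ θ) (hh : 0 ≤ h) (hm : 0 ≤ cirMuTilde μ b) {x : ℝ}
    (hx : 0 ≤ x) : 0 ≤ cirPhi θ μ b h x := by
  have hα : Real.exp (-θ * h) ≤ 1 := Real.exp_le_one_iff.2 (by nlinarith)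
  have := Real.exp_pos (-θ * h)
  rw [cirPhi_eq]
  nlinarith

variable {Ω : Type*} {mΩ : MeasurableSpace Ω} {P : Measure Ω} {Y ξ : Ω → ℝ}

lemma MeasureTheory.Integrable.cirPhi [IsFiniteMeasure P] (hY : Integrable Y P) :
    Integrable (fun ω => cirPhi θ μ b h (Y ω)) P := by
  simp_rw [cirPhi_eq]
  exact (hY.const_mul _).add (integrable_const _)

lemma integral_cirPhi [IsProbabilityMeasure P] (hY : Integrable Y P) :
    ∫ ω, cirPhi θ μ b h (Y ω) ∂P = cirPhi θ μ b h (P[Y]) := by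
  simp_rw [cirPhi_eq]
  rw [integral_add (hY.const_mul _) (integrable_const _), integral_const_mul, integral_const]
  simp

noncomputable def cirLTStep (θ μ b h x y : ℝ) : ℝ :=
  (Real.sqrt (cirPhi θ μ b h x) + (Real.sqrt (2 * θ * b) / 2) * y) ^ 2

lemma measurable_cirLTStep : Measurable (Function.uncurry (cirLTStep θ μ b h)) := by
  unfold cirLTStep cirPhi
  fun_prop

lemma cirLTStep_nonneg (x y : ℝ) : 0 ≤ cirLTStep θ μ b h x y := sq_nonneg _

lemma integrable_cirLTStep [IsProbabilityMeasure P] (hθ : 0 ≤ θ) (hh : 0 ≤ h)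
    (hm : 0 ≤ cirMuTilde μ b) (hY : Integrable Y P) (hY0 : ∀ ω, 0 ≤ Y ω)
    (hξ : HasLaw ξ (gaussianReal 0 h.toNNReal) P) :
    Integrable (fun ω => cirLTStep θ μ b h (Y ω) (ξ ω)) P :=
  (memLp_two_sqrt_add_mul hY.cirPhi (.of_forall fun ω => cirPhi_nonneg hθ hh hm (hY0 ω))
    (hξ.memLp_of_gaussianReal (by simp)) _).integrable_sq

lemma integral_cirLTStep [IsProbabilityMeasure P] (hθ : 0 ≤ θ) (hb : 0 ≤ b) (hh : 0 ≤ h)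
    (hm : 0 ≤ cirMuTilde μ b) (hY : Integrable Y P) (hY0 : ∀ ω, 0 ≤ Y ω)
    (hξ : HasLaw ξ (gaussianReal 0 h.toNNReal) P) (hind : IndepFun Y ξ P) :
    ∫ ω, cirLTStep θ μ b h (Y ω) (ξ ω) ∂P = cirPhi θ μ b h (P[Y]) + θ * b * h / 2 := by
  have hc : (Real.sqrt (2 * θ * b) / 2) ^ 2 = θ * b / 2 := by
    rw [div_pow, Real.sq_sqrt (by positivity)]
    ring
  rw [← integral_cirPhi hY]
  unfold cirLTStep
  rw [integral_sq_sqrt_add_mul hY.cirPhi (.of_forall fun ω => cirPhi_nonneg hθ hh hm (hY0 ω))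
    (hξ.memLp_of_gaussianReal (by simp)) (hξ.integral_eq.trans integral_id_gaussianReal)
    (hind.comp measurable_cirPhi measurable_id), hξ.integral_sq_of_gaussianReal,
    Real.coe_toNNReal h hh, hc]
  ring

end CIR

/-- Global conditional mean of the CIR Lie–Trotter chain: with `X₀ = x₀` and
`X_{k+1} = (√(φ_h(X_k)) + (√(2θb)/2) ξ_k)²` for i.i.d. `ξ_k ~ N(0,h)`, one has for
every `n ≥ 1`
`E[X_n] = e^{−θnh} x₀ + μ̃(1 − e^{−θnh}) + (θbh/2)(1 − e^{−θnh})/(1 − e^{−θh})`. -/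
theorem cir_LT_global_mean
    {Ω : Type*} [MeasurableSpace Ω] (P : Measure Ω) [IsProbabilityMeasure P]
    (θ μ b h x₀ : ℝ) (hθ : 0 < θ) (hb : 0 < b) (hμ : b ≤ μ) (hh : 0 < h)
    (hx₀ : 0 ≤ x₀)
    (ξ : ℕ → Ω → ℝ) (hmeas : ∀ k, Measurable (ξ k))
    (hindep : iIndepFun ξ P)
    (hlaw : ∀ k, Measure.map (ξ k) P = gaussianReal 0 h.toNNReal)
    (X : ℕ → Ω → ℝ)
    (hX0 : ∀ ω, X 0 ω = x₀)
    (hXstep : ∀ k ω, X (k + 1) ω =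
      (Real.sqrt (cirPhi θ μ b h (X k ω)) + (Real.sqrt (2 * θ * b) / 2) * ξ k ω) ^ 2) :
    ∀ n : ℕ, 1 ≤ n →
      (∫ ω, X n ω ∂P)
        = Real.exp (-θ * n * h) * x₀
          + cirMuTilde μ b * (1 - Real.exp (-θ * n * h))
          + (θ * b * h / 2) * (1 - Real.exp (-θ * n * h)) / (1 - Real.exp (-θ * h)) := by
  intro n _
  set α := Real.exp (-θ * h)
  have hX0' : X 0 = fun _ => x₀ := funext hX0
  have hm : 0 ≤ cirMuTilde μ b := by unfold cirMuTilde; linarith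
  have hξ (k : ℕ) : HasLaw (ξ k) (gaussianReal 0 h.toNNReal) P := ⟨(hmeas k).aemeasurable, hlaw k⟩
  have hstep (k : ℕ) : X (k + 1) = fun ω => cirLTStep θ μ b h (X k ω) (ξ k ω) := funext (hXstep k)
  have hX_nonneg (k : ℕ) (ω : Ω) : 0 ≤ X k ω := by
    cases k with
    | zero => rw [hX0]; exact hx₀
    | succ k => rw [hstep]; exact cirLTStep_nonneg _ _
  have hind := indepFun_of_recursion hmeas hindep measurable_cirLTStep hX0 hXstep
  have hint (k : ℕ) : Integrable (X k) P := by
    induction k with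
    | zero => rw [hX0']; exact integrable_const x₀
    | succ k ih =>
      rw [hstep]
      exact integrable_cirLTStep hθ.le hh.le hm ih (hX_nonneg k) (hξ k)
  have hrec (k : ℕ) : P[X (k + 1)] = α * P[X k] + ((1 - α) * cirMuTilde μ b + θ * b * h / 2) := by
    rw [hstep,
      integral_cirLTStep hθ.le hb.le hh.le hm (hint k) (hX_nonneg k) (hξ k) (hind k), cirPhi_eq]
    ring
  have hα : α ≠ 1 := (Real.exp_lt_one_iff.2 (by nlinarith)).ne
  have hαn : Real.exp (-θ * n * h) = α ^ n := by
    rw [← Real.exp_nat_mul]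
    ring_nf
  rw [eq_pow_mul_add_of_affine_recurrence (a := fun k => P[X k]) hα hrec n, hαn,
    hX0', integral_const, probReal_univ, one_smul]
  field_simp [sub_ne_zero.2 hα.symm]
  ring
end

section
/- Let θ > 0, μ ∈ ℝ, h > 0, x₀ ∈ ℝ, and let ξ₀, ξ₁, … be i.i.d. with law N(0,h). Define the LT chain by X₀ = x₀, X_{k+1} = μ + e^{−θh}(X_k − μ) + √(2θ)·ξ_k, and the Strang chain by Y₀ = x₀, Y_{k+1} = μ + e^{−θh}(Y_k − μ) + √(2θ)·e^{−θh/2}·ξ_k. Then for every n ≥ 1, X_n is Gaussian with mean e^{−θnh}x₀ + μ(1 − e^{−θnh}) and variance 2θh(1 − e^{−2θnh})/(1 − e^{−2θh}), and Y_n is Gaussian with the same mean and variance 2θh·e^{−θh}(1 − e^{−2θnh})/(1 − e^{−2θh}). In particular both schemes have exactly the conditional mean of the Ornstein–Uhlenbeck process and a biased variance. -/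
/-!
Unrolling the recursion `Z_{k+1} = μ + a (Z_k - μ) + c ξ_k` gives
`Z_n = μ + aⁿ (x₀ - μ) + ∑_{k<n} c a^{n-1-k} ξ_k`, a constant plus a sum of independent centred
Gaussians, so `Z_n ~ N(μ + aⁿ (x₀ - μ), c² h ∑_{k<n} a^{2k})`. With `a = e^{-θh}` the geometric sum
gives the closed forms; the two schemes differ only through `c² = 2θ` (Lie–Trotter) and
`c² = 2θ e^{-θh}` (Strang).
-/

open MeasureTheory ProbabilityTheory Finset

lemma ar1_eq_add_sum {R : Type*} [CommRing R] (a μ x₀ : R) (z e : ℕ → R) (hz0 : z 0 = x₀)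
    (hstep : ∀ k, z (k + 1) = μ + a * (z k - μ) + e k) (n : ℕ) :
    z n = μ + a ^ n * (x₀ - μ) + ∑ k ∈ range n, a ^ (n - 1 - k) * e k := by
  induction n with
  | zero => simp [hz0]
  | succ n ih =>
    have hpow : ∀ k ∈ range n, a * (a ^ (n - 1 - k) * e k) = a ^ (n - k) * e k := fun k hk => by
      rw [← mul_assoc, ← pow_succ']; congr 2; have := mem_range.mp hk; omega
    rw [hstep, ih, sum_range_succ, Nat.add_sub_cancel, Nat.sub_self, pow_zero, one_mul,
      ← sum_congr rfl hpow, ← mul_sum, pow_succ']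
    ring

lemma map_sum_eq_gaussianReal_of_iIndepFun {Ω ι : Type*} [MeasurableSpace Ω] {P : Measure Ω}
    [IsProbabilityMeasure P] {ξ : ι → Ω → ℝ} (hmeas : ∀ i, Measurable (ξ i))
    (hindep : iIndepFun ξ P) {m : ι → ℝ} {v : ι → NNReal}
    (hlaw : ∀ i, P.map (ξ i) = gaussianReal (m i) (v i)) (s : Finset ι) :
    P.map (∑ i ∈ s, ξ i) = gaussianReal (∑ i ∈ s, m i) (∑ i ∈ s, v i) := by
  classical
  induction s using Finset.induction_on with
  | empty => simp [Pi.zero_def, Measure.map_const, gaussianReal_zero_var]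
  | insert i s hi ih =>
    rw [sum_insert hi, sum_insert hi, sum_insert hi, add_comm (ξ i), add_comm (m i),
      add_comm (v i)]
    exact gaussianReal_add_gaussianReal_of_indepFun
      (hindep.indepFun_finsetSum_of_notMem hmeas hi) ih (hlaw i)

lemma map_ar1_eq_gaussianReal {Ω : Type*} [MeasurableSpace Ω] {P : Measure Ω}
    [IsProbabilityMeasure P] {ξ : ℕ → Ω → ℝ} (hmeas : ∀ k, Measurable (ξ k))
    (hindep : iIndepFun ξ P) {v : NNReal} (hlaw : ∀ k, P.map (ξ k) = gaussianReal 0 v)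
    (a c μ x₀ : ℝ) {Z : ℕ → Ω → ℝ} (hZ0 : ∀ ω, Z 0 ω = x₀)
    (hstep : ∀ k ω, Z (k + 1) ω = μ + a * (Z k ω - μ) + c * ξ k ω) (n : ℕ) :
    P.map (Z n) = gaussianReal (μ + a ^ n * (x₀ - μ))
      (c ^ 2 * v * ∑ k ∈ range n, (a ^ 2) ^ k).toNNReal := by
  set b : ℕ → ℝ := fun k => c * a ^ (n - 1 - k)
  set η : ℕ → Ω → ℝ := fun k ω => b k * ξ k ω
  have hη_meas : ∀ k, Measurable (η k) := fun k => (hmeas k).const_mul _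
  have hη_law : ∀ k, P.map (η k) = gaussianReal (b k * 0) (.mk (b k ^ 2) (sq_nonneg _) * v) :=
    fun k => by
      rw [← gaussianReal_map_const_mul, ← hlaw k,
        Measure.map_map (measurable_const_mul _) (hmeas k)]
      rfl
  have hZ : Z n = (μ + a ^ n * (x₀ - μ) + ·) ∘ ∑ k ∈ range n, η k := by
    funext ω
    rw [ar1_eq_add_sum a μ x₀ (Z · ω) (c * ξ · ω) (hZ0 ω) (hstep · ω), Function.comp_apply,
      Finset.sum_apply]
    congr 1
    exact sum_congr rfl fun k _ => by ring
  rw [hZ, ← Measure.map_map (measurable_const_add _) (by fun_prop),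
    map_sum_eq_gaussianReal_of_iIndepFun hη_meas
      (hindep.comp _ fun k => measurable_const_mul (b k)) hη_law,
    gaussianReal_map_const_add]
  simp only [mul_zero, sum_const_zero, zero_add]
  congr 1
  apply NNReal.coe_injective
  rw [Real.coe_toNNReal _ (by positivity), NNReal.coe_sum,
    ← sum_range_reflect (fun k => (a ^ 2) ^ k) n, mul_sum]
  refine sum_congr rfl fun k _ => ?_
  simp only [b, NNReal.coe_mul, NNReal.coe_mk]
  ring

lemma geom_sum_exp_sq (θ h : ℝ) (hθh : θ * h ≠ 0) (n : ℕ) :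
    ∑ k ∈ range n, (Real.exp (-θ * h) ^ 2) ^ k
      = (1 - Real.exp (-2 * θ * n * h)) / (1 - Real.exp (-2 * θ * h)) := by
  have hsq : Real.exp (-θ * h) ^ 2 = Real.exp (-2 * θ * h) := by
    rw [← Real.exp_nat_mul]; ring_nf
  have hne : Real.exp (-2 * θ * h) ≠ 1 := by
    rw [Ne, Real.exp_eq_one_iff]; contrapose! hθh; linarith
  rw [hsq, geom_sum_eq hne, ← Real.exp_nat_mul, ← neg_div_neg_eq, neg_sub, neg_sub]
  ring_nf

/-- Exact distributions of the Lie–Trotter and Strang splitting chains for the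
Ornstein–Uhlenbeck process: with `X₀ = Y₀ = x₀`,
`X_{k+1} = μ + e^{−θh}(X_k − μ) + √(2θ) ξ_k` and
`Y_{k+1} = μ + e^{−θh}(Y_k − μ) + √(2θ) e^{−θh/2} ξ_k` for i.i.d. `ξ_k ~ N(0,h)`,
for every `n ≥ 1` the law of `X_n` is Gaussian with mean
`e^{−θnh} x₀ + μ(1 − e^{−θnh})` and variance `2θh(1 − e^{−2θnh})/(1 − e^{−2θh})`,
and the law of `Y_n` is Gaussian with the same mean and variance
`2θh e^{−θh}(1 − e^{−2θnh})/(1 − e^{−2θh})`. -/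
theorem ou_LT_Strang_chain_gaussian
    {Ω : Type*} [MeasurableSpace Ω] (P : Measure Ω) [IsProbabilityMeasure P]
    (θ μ h x₀ : ℝ) (hθ : 0 < θ) (hh : 0 < h)
    (ξ : ℕ → Ω → ℝ) (hmeas : ∀ k, Measurable (ξ k))
    (hindep : iIndepFun ξ P)
    (hlaw : ∀ k, Measure.map (ξ k) P = gaussianReal 0 h.toNNReal)
    (X Y : ℕ → Ω → ℝ)
    (hX0 : ∀ ω, X 0 ω = x₀)
    (hXstep : ∀ k ω, X (k + 1) ω =
      μ + Real.exp (-θ * h) * (X k ω - μ) + Real.sqrt (2 * θ) * ξ k ω)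
    (hY0 : ∀ ω, Y 0 ω = x₀)
    (hYstep : ∀ k ω, Y (k + 1) ω =
      μ + Real.exp (-θ * h) * (Y k ω - μ)
        + Real.sqrt (2 * θ) * Real.exp (-θ * h / 2) * ξ k ω) :
    ∀ n : ℕ, 1 ≤ n →
      Measure.map (X n) P
          = gaussianReal
              (Real.exp (-θ * n * h) * x₀ + μ * (1 - Real.exp (-θ * n * h)))
              ((2 * θ * h * (1 - Real.exp (-2 * θ * n * h))
                / (1 - Real.exp (-2 * θ * h))).toNNReal)
        ∧ Measure.map (Y n) P
            = gaussianReal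
                (Real.exp (-θ * n * h) * x₀ + μ * (1 - Real.exp (-θ * n * h)))
                ((2 * θ * h * Real.exp (-θ * h) * (1 - Real.exp (-2 * θ * n * h))
                  / (1 - Real.exp (-2 * θ * h))).toNNReal) := by
  intro n _
  have hlaw_ar1 := fun c Z hZ0 hstep =>
    map_ar1_eq_gaussianReal hmeas hindep hlaw (Real.exp (-θ * h)) c μ x₀ (Z := Z) hZ0 hstep n
  have hmean : μ + Real.exp (-θ * h) ^ n * (x₀ - μ)
      = Real.exp (-θ * n * h) * x₀ + μ * (1 - Real.exp (-θ * n * h)) := by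
    rw [← Real.exp_nat_mul]; ring_nf
  have hvar : ∀ c : ℝ, c ^ 2 * h.toNNReal * ∑ k ∈ range n, (Real.exp (-θ * h) ^ 2) ^ k
      = c ^ 2 * h * (1 - Real.exp (-2 * θ * n * h)) / (1 - Real.exp (-2 * θ * h)) := fun c => by
    rw [Real.coe_toNNReal _ hh.le, geom_sum_exp_sq θ h (by positivity)]
    ring
  have hc_Y : (Real.sqrt (2 * θ) * Real.exp (-θ * h / 2)) ^ 2 = 2 * θ * Real.exp (-θ * h) := by
    rw [mul_pow, Real.sq_sqrt (by positivity), ← Real.exp_nat_mul]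
    ring_nf
  refine ⟨?_, ?_⟩
  · rw [hlaw_ar1 _ X hX0 hXstep, hmean, hvar, Real.sq_sqrt (by positivity)]
  · rw [hlaw_ar1 _ Y hY0 hYstep, hmean, hvar, hc_Y]
    congr 2
    ring
end

section
/- For every u > 0: (i) 2u·e^{−u} < 1 − e^{−2u} < 2u, and (ii) 2u − (1 − e^{−2u}) > (1 − e^{−2u}) − 2u·e^{−u}. Interpreting u = θh, this says that the one-step noise variance 2θh of the LT scheme for the Ornstein–Uhlenbeck process strictly overestimates the true one-step variance 1 − e^{−2θh}, the Strang one-step noise variance 2θh·e^{−θh} strictly underestimates it, and the absolute variance bias of the Strang scheme is strictly smaller than that of the LT scheme, for every step size h > 0. -/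
/-!
Write `1 - e^{-2u} = (1 - e^{-u})(1 + e^{-u}) = 2 e^{-u} sinh u`. The lower bound is then
`u < sinh u`, and the upper bound is the tangent-line bound `1 - t < e^{-t}` at `t = 2u`.
The bias comparison says `1 - e^{-2u} < u (1 + e^{-u})`; dividing by `1 + e^{-u}` it is the
same tangent-line bound at `t = u`.
-/

open Real

namespace Real

theorem one_sub_exp_neg_two_mul_eq_mul (u : ℝ) :
    1 - exp (-2 * u) = (1 - exp (-u)) * (1 + exp (-u)) := by
  rw [show -2 * u = -u + -u by ring, exp_add]
  ring

theorem one_sub_exp_neg_two_mul_eq_two_mul_exp_neg_mul_sinh (u : ℝ) :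
    1 - exp (-2 * u) = 2 * exp (-u) * sinh u := by
  rw [one_sub_exp_neg_two_mul_eq_mul, sinh_eq]
  have h : exp (-u) * exp u = 1 := by rw [← exp_add, neg_add_cancel, exp_zero]
  linear_combination -h

theorem one_sub_exp_neg_lt_self {u : ℝ} (hu : u ≠ 0) : 1 - exp (-u) < u := by
  linarith [one_sub_lt_exp_neg hu]

theorem one_sub_exp_neg_two_mul_lt {u : ℝ} (hu : u ≠ 0) : 1 - exp (-2 * u) < 2 * u := by
  simpa [neg_mul] using one_sub_exp_neg_lt_self (mul_ne_zero two_ne_zero hu)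

theorem two_mul_mul_exp_neg_lt_one_sub_exp_neg_two_mul {u : ℝ} (hu : 0 < u) :
    2 * u * exp (-u) < 1 - exp (-2 * u) := by
  rw [one_sub_exp_neg_two_mul_eq_two_mul_exp_neg_mul_sinh, mul_right_comm]
  gcongr
  exact self_lt_sinh_iff.mpr hu

theorem one_sub_exp_neg_two_mul_lt_mul_one_add_exp_neg {u : ℝ} (hu : u ≠ 0) :
    1 - exp (-2 * u) < u * (1 + exp (-u)) := by
  rw [one_sub_exp_neg_two_mul_eq_mul]
  gcongr
  exact one_sub_exp_neg_lt_self hu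

end Real

/-- For every `u > 0`: the Lie–Trotter one-step noise variance `2u` strictly
overestimates the exact Ornstein–Uhlenbeck one-step variance `1 − e^{−2u}`, the
Strang noise variance `2u e^{−u}` strictly underestimates it, and the absolute
variance bias of Strang is strictly smaller than that of Lie–Trotter. -/
theorem ou_variance_bias (u : ℝ) (hu : 0 < u) :
    2 * u * Real.exp (-u) < 1 - Real.exp (-2 * u)
      ∧ 1 - Real.exp (-2 * u) < 2 * u
      ∧ (1 - Real.exp (-2 * u)) - 2 * u * Real.exp (-u)
          < 2 * u - (1 - Real.exp (-2 * u)) := by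
  refine ⟨two_mul_mul_exp_neg_lt_one_sub_exp_neg_two_mul hu,
    one_sub_exp_neg_two_mul_lt hu.ne', ?_⟩
  linarith [one_sub_exp_neg_two_mul_lt_mul_one_add_exp_neg hu.ne']
end

section
/- Let q > 1 and b ≥ 0 be constants, and let u, a : [0,∞) → [0,∞) be continuous functions such that u(t) ≤ a(t) + b·∫₀ᵗ u(s)^q ds for all t ≥ 0. Define κ(t) = 2^{q−1}·b·∫₀ᵗ a(s)^q ds. Then for every t ≥ 0 such that κ(t) > 0 and κ(t)^{1−q} − (q−1)·2^{q−1}·b·t > 0, one has u(t) ≤ a(t) + (κ(t)^{1−q} − (q−1)·2^{q−1}·b·t)^{1/(1−q)}. -/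
/-!
Write `v(s) = b ∫₀ˢ u^q`, so that `u ≤ a + v`. By `(x + y)^q ≤ 2^{q-1} (x^q + y^q)`, on `[0, t]`
the function `v` satisfies the Bihari-type inequality `v ≤ K + c ∫₀ˢ v^q` with `c = 2^{q-1} b` and
`K = κ(t)`. For its right-hand side `w` one has `w' = c v^q ≤ c w^q`, so
`(w^{1-q})' ≥ -(q-1) c`, i.e. `w(s)^{1-q} ≥ K^{1-q} - (q-1) c s`; inverting the decreasing power
`x ↦ x^{1/(1-q)}` gives `v(t) ≤ w(t) ≤ (K^{1-q} - (q-1) c t)^{1/(1-q)}`.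
-/

open Set intervalIntegral

lemma Real.add_rpow_le_two_rpow_mul {x y q : ℝ} (hx : 0 ≤ x) (hy : 0 ≤ y) (hq : 1 ≤ q) :
    (x + y) ^ q ≤ 2 ^ (q - 1) * (x ^ q + y ^ q) := by
  lift x to NNReal using hx
  lift y to NNReal using hy
  exact_mod_cast NNReal.rpow_add_le_mul_rpow_add_rpow x y hq

lemma ContinuousOn.hasDerivAt_primitive_of_mem_Ioo {f : ℝ → ℝ} {S T s : ℝ}
    (hf : ContinuousOn f (Icc S T)) (hs : s ∈ Ioo S T) :
    HasDerivAt (fun x => ∫ r in S..x, f r) (f s) s :=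
  integral_hasDerivAt_right
    ((hf.mono (Icc_subset_Icc le_rfl hs.2.le)).intervalIntegrable_of_Icc hs.1.le)
    ((hf.mono Ioo_subset_Icc_self).stronglyMeasurableAtFilter isOpen_Ioo s hs)
    (hf.continuousAt (Icc_mem_nhds hs.1 hs.2))

lemma ContinuousOn.continuousOn_primitive_Icc {f : ℝ → ℝ} {S T : ℝ}
    (hf : ContinuousOn f (Icc S T)) (hST : S ≤ T) :
    ContinuousOn (fun x => ∫ r in S..x, f r) (Icc S T) := by
  rw [← uIcc_of_le hST] at hf ⊢
  exact continuousOn_primitive_interval (hf.integrableOn_compact isCompact_uIcc)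

lemma monotoneOn_rpow_one_sub_add_mul {w w' : ℝ → ℝ} {q c S T : ℝ} (hq : 1 ≤ q)
    (hw : ContinuousOn w (Icc S T)) (hpos : ∀ s ∈ Icc S T, 0 < w s)
    (hderiv : ∀ s ∈ Ioo S T, HasDerivAt w (w' s) s)
    (hw' : ∀ s ∈ Ioo S T, w' s ≤ c * w s ^ q) :
    MonotoneOn (fun s => w s ^ (1 - q) + (q - 1) * c * s) (Icc S T) := by
  have hF : ∀ s ∈ Ioo S T, HasDerivAt (fun s => w s ^ (1 - q) + (q - 1) * c * s)
      (w' s * (1 - q) * w s ^ (1 - q - 1) + (q - 1) * c) s := fun s hs =>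
    ((hderiv s hs).rpow_const (Or.inl (hpos s (Ioo_subset_Icc_self hs)).ne')).add
      ((hasDerivAt_id s).const_mul ((q - 1) * c) |>.congr_deriv (mul_one _))
  refine monotoneOn_of_deriv_nonneg (convex_Icc S T) ?_ ?_ ?_
  · exact (hw.rpow_const fun s hs => Or.inl (hpos s hs).ne').add (by fun_prop)
  · rw [interior_Icc]
    exact fun s hs => (hF s hs).differentiableAt.differentiableWithinAt
  · rw [interior_Icc]
    intro s hs
    have hws : 0 < w s := hpos s (Ioo_subset_Icc_self hs)
    have hW : 0 ≤ w s ^ (1 - q - 1) := by positivity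
    have hrate : w' s * w s ^ (1 - q - 1) ≤ c :=
      calc w' s * w s ^ (1 - q - 1) ≤ c * w s ^ q * w s ^ (1 - q - 1) :=
            mul_le_mul_of_nonneg_right (hw' s hs) hW
        _ = c := by rw [mul_assoc, ← Real.rpow_add hws]; norm_num
    rw [(hF s hs).deriv]
    linarith [mul_le_mul_of_nonneg_left hrate (sub_nonneg.2 hq)]

/-- Bihari's inequality for the power nonlinearity `v ↦ v ^ q`, `q > 1`. -/
theorem le_rpow_of_le_add_integral_rpow {v : ℝ → ℝ} {q c K S T : ℝ} (hq : 1 < q) (hc : 0 ≤ c)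
    (hK : 0 < K) (hST : S ≤ T) (hv : ContinuousOn v (Icc S T)) (hv0 : ∀ s ∈ Icc S T, 0 ≤ v s)
    (hle : ∀ s ∈ Icc S T, v s ≤ K + c * ∫ r in S..s, v r ^ q)
    (hD : 0 < K ^ (1 - q) - (q - 1) * c * (T - S)) :
    v T ≤ (K ^ (1 - q) - (q - 1) * c * (T - S)) ^ (1 / (1 - q)) := by
  set w : ℝ → ℝ := fun s => K + c * ∫ r in S..s, v r ^ q
  have hvq : ContinuousOn (fun r => v r ^ q) (Icc S T) :=
    hv.rpow_const fun _ _ => Or.inr (by linarith)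
  have hwK : ∀ s ∈ Icc S T, K ≤ w s := fun s hs =>
    le_add_of_nonneg_right <| mul_nonneg hc <|
      integral_nonneg hs.1 fun r hr => Real.rpow_nonneg (hv0 r ⟨hr.1, hr.2.trans hs.2⟩) q
  have hmono := monotoneOn_rpow_one_sub_add_mul (w := w) (w' := fun s => c * v s ^ q) hq.le
    (continuousOn_const.add (continuousOn_const.mul (hvq.continuousOn_primitive_Icc hST)))
    (fun s hs => hK.trans_le (hwK s hs))
    (fun s hs => (hvq.hasDerivAt_primitive_of_mem_Ioo hs).const_mul c |>.const_add K)
    (fun s hs => mul_le_mul_of_nonneg_left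
      (Real.rpow_le_rpow (hv0 s (Ioo_subset_Icc_self hs)) (hle s (Ioo_subset_Icc_self hs))
        (by linarith)) hc)
  have hwT : K ^ (1 - q) - (q - 1) * c * (T - S) ≤ w T ^ (1 - q) := by
    have := hmono (left_mem_Icc.2 hST) (right_mem_Icc.2 hST) hST
    simp only [w, integral_same, mul_zero, add_zero] at this
    linarith
  rw [one_div]
  calc v T ≤ w T := hle T (right_mem_Icc.2 hST)
    _ ≤ _ := (Real.le_rpow_inv_iff_of_neg (hK.trans_le (hwK T (right_mem_Icc.2 hST))) hD
      (by linarith)).2 hwT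

lemma integral_rpow_le_of_le_add {u a v : ℝ → ℝ} {q S T : ℝ} (hq : 1 ≤ q) (hST : S ≤ T)
    (hu : ContinuousOn u (Icc S T)) (ha : ContinuousOn a (Icc S T))
    (hv : ContinuousOn v (Icc S T)) (hu0 : ∀ s ∈ Icc S T, 0 ≤ u s)
    (ha0 : ∀ s ∈ Icc S T, 0 ≤ a s) (hv0 : ∀ s ∈ Icc S T, 0 ≤ v s)
    (hle : ∀ s ∈ Icc S T, u s ≤ a s + v s) :
    ∫ r in S..T, u r ^ q ≤ 2 ^ (q - 1) * ((∫ r in S..T, a r ^ q) + ∫ r in S..T, v r ^ q) := by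
  have hq0 : 0 ≤ q := by linarith
  have hint : ∀ f : ℝ → ℝ, ContinuousOn f (Icc S T) →
      IntervalIntegrable (fun r => f r ^ q) MeasureTheory.volume S T :=
    fun f hf => (hf.rpow_const fun _ _ => Or.inr hq0).intervalIntegrable_of_Icc hST
  rw [← integral_add (hint a ha) (hint v hv), ← integral_const_mul]
  refine integral_mono_on hST (hint u hu) (((hint a ha).add (hint v hv)).const_mul _)
    fun s hs => ?_
  calc u s ^ q ≤ (a s + v s) ^ q := Real.rpow_le_rpow (hu0 s hs) (hle s hs) hq0
    _ ≤ _ := Real.add_rpow_le_two_rpow_mul (ha0 s hs) (hv0 s hs) hq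

lemma mul_integral_rpow_le_of_le_add_mul_integral_rpow {u a : ℝ → ℝ} {q b S T : ℝ} (hq : 1 ≤ q)
    (hb : 0 ≤ b) (hu : ContinuousOn u (Icc S T)) (ha : ContinuousOn a (Icc S T))
    (hu0 : ∀ s ∈ Icc S T, 0 ≤ u s) (ha0 : ∀ s ∈ Icc S T, 0 ≤ a s)
    (hbound : ∀ s ∈ Icc S T, u s ≤ a s + b * ∫ r in S..s, u r ^ q) {s : ℝ} (hs : s ∈ Icc S T) :
    b * ∫ r in S..s, u r ^ q ≤ 2 ^ (q - 1) * b * (∫ r in S..T, a r ^ q)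
      + 2 ^ (q - 1) * b * ∫ r in S..s, (b * ∫ x in S..r, u x ^ q) ^ q := by
  have hq0 : 0 ≤ q := by linarith
  have hsub : Icc S s ⊆ Icc S T := Icc_subset_Icc_right hs.2
  have ha_mono : ∫ r in S..s, a r ^ q ≤ ∫ r in S..T, a r ^ q :=
    integral_mono_interval le_rfl hs.1 hs.2
      ((MeasureTheory.ae_restrict_mem measurableSet_Ioc).mono fun r hr =>
        Real.rpow_nonneg (ha0 r (Ioc_subset_Icc_self hr)) q)
      ((ha.rpow_const fun _ _ => Or.inr hq0).intervalIntegrable_of_Icc (hs.1.trans hs.2))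
  have hu_int := integral_rpow_le_of_le_add (v := fun r => b * ∫ x in S..r, u x ^ q) hq hs.1
    (hu.mono hsub) (ha.mono hsub)
    (continuousOn_const.mul
      (((hu.mono hsub).rpow_const fun _ _ => Or.inr hq0).continuousOn_primitive_Icc hs.1))
    (fun r hr => hu0 r (hsub hr)) (fun r hr => ha0 r (hsub hr))
    (fun r hr => mul_nonneg hb <| integral_nonneg hr.1 fun x hx =>
      Real.rpow_nonneg (hu0 x ⟨hx.1, hx.2.trans (hsub hr).2⟩) q)
    (fun r hr => hbound r (hsub hr))
  have h2b : 0 ≤ (2 : ℝ) ^ (q - 1) * b := by positivity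
  nlinarith [mul_le_mul_of_nonneg_left hu_int hb, mul_le_mul_of_nonneg_left ha_mono h2b]

/-- Generalized (nonlinear) Gronwall inequality with superlinear exponent `q > 1`:
if `u(t) ≤ a(t) + b ∫₀ᵗ u(s)^q ds` for all `t ≥ 0`, then, setting
`κ(t) = 2^{q−1} b ∫₀ᵗ a(s)^q ds`, for every `t ≥ 0` with `κ(t) > 0` and
`κ(t)^{1−q} − (q−1) 2^{q−1} b t > 0`, one has
`u(t) ≤ a(t) + (κ(t)^{1−q} − (q−1) 2^{q−1} b t)^{1/(1−q)}`. -/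
theorem nonlinear_gronwall
    (q b : ℝ) (hq : 1 < q) (hb : 0 ≤ b)
    (u a : ℝ → ℝ)
    (hu_cont : ContinuousOn u (Set.Ici 0)) (ha_cont : ContinuousOn a (Set.Ici 0))
    (hu_nonneg : ∀ t, 0 ≤ t → 0 ≤ u t) (ha_nonneg : ∀ t, 0 ≤ t → 0 ≤ a t)
    (hbound : ∀ t, 0 ≤ t → u t ≤ a t + b * ∫ s in (0 : ℝ)..t, u s ^ q) :
    ∀ t, 0 ≤ t →
      0 < (2 : ℝ) ^ (q - 1) * b * ∫ s in (0 : ℝ)..t, a s ^ q →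
      0 < ((2 : ℝ) ^ (q - 1) * b * ∫ s in (0 : ℝ)..t, a s ^ q) ^ (1 - q)
            - (q - 1) * 2 ^ (q - 1) * b * t →
      u t ≤ a t
        + (((2 : ℝ) ^ (q - 1) * b * ∫ s in (0 : ℝ)..t, a s ^ q) ^ (1 - q)
            - (q - 1) * 2 ^ (q - 1) * b * t) ^ (1 / (1 - q)) := by
  intro t ht hκ hD
  have hu : ContinuousOn u (Icc 0 t) := hu_cont.mono Icc_subset_Ici_self
  have hv : ContinuousOn (fun s => b * ∫ r in (0 : ℝ)..s, u r ^ q) (Icc 0 t) :=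
    continuousOn_const.mul
      ((hu.rpow_const fun _ _ => Or.inr (by linarith)).continuousOn_primitive_Icc ht)
  have hv0 : ∀ s ∈ Icc 0 t, 0 ≤ b * ∫ r in (0 : ℝ)..s, u r ^ q := fun s hs =>
    mul_nonneg hb (integral_nonneg hs.1 fun r hr => Real.rpow_nonneg (hu_nonneg r hr.1) q)
  have hv_le := le_rpow_of_le_add_integral_rpow hq (by positivity) hκ ht hv hv0
    (fun s => mul_integral_rpow_le_of_le_add_mul_integral_rpow hq.le hb hu
      (ha_cont.mono Icc_subset_Ici_self) (fun r hr => hu_nonneg r hr.1)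
      (fun r hr => ha_nonneg r hr.1) (fun r hr => hbound r hr.1))
    (by simpa only [sub_zero, mul_assoc] using hD)
  simp only [sub_zero, mul_assoc] at hv_le ⊢
  linarith [hbound t ht]
end

section
/- Let f : ℝ → ℝ be twice continuously differentiable with |f(z)| ≤ M₀, |f'(z)| ≤ M₁ and |f''(z)| ≤ M₂ for all z ∈ ℝ, and let x : [0,T] → ℝ be differentiable with x'(t) = f(x(t)) for all t ∈ [0,T]. Then for every t ∈ [0,T]: |x(t) − x(0) − t·f(x(0)) − (t²/2)·f(x(0))·f'(x(0))| ≤ M₀·(M₀M₂ + M₁²)·t³/6. -/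
/-!
Along a solution of `x' = f(x)`, every differentiable observable `h` satisfies
`(h ∘ x)' = (L h) ∘ x` with `L h = h' · f` (`lieDeriv f h`). Hence, if `|Lⁿ h| ≤ C`,
integrating this bound `n` times by the comparison principle shows that `h ∘ x` differs from
its Taylor polynomial `∑_{j<n} tʲ/j! (Lʲ h)(x 0)` by at most `C tⁿ/n!`. For `h = id` and
`n = 3` the Taylor polynomial is `x 0 + t f(x 0) + t²/2 (f f')(x 0)` and
`L³ id = (f'' f + f'²) f` is bounded by `M₀ (M₀ M₂ + M₁²)`.
-/

open Set Finset Nat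

lemma hasDerivAt_pow_succ_div_factorial (n : ℕ) (t : ℝ) :
    HasDerivAt (fun s : ℝ => s ^ (n + 1) / (n + 1)!) (t ^ n / n !) t := by
  refine ((hasDerivAt_pow (n + 1) t).div_const ((n + 1)! : ℝ)).congr_deriv ?_
  rw [factorial_succ]
  push_cast
  field_simp

section Comparison

variable {E : Type*} [NormedAddCommGroup E] [NormedSpace ℝ E] {g g' : ℝ → E}

lemma norm_le_of_hasDerivWithinAt_Icc {B B' : ℝ → ℝ} {a b : ℝ}
    (hg : ∀ t ∈ Icc a b, HasDerivWithinAt g (g' t) (Icc a b) t)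
    (hB : ∀ t, HasDerivAt B (B' t) t) (ha : ‖g a‖ ≤ B a)
    (bound : ∀ t ∈ Icc a b, ‖g' t‖ ≤ B' t) :
    ∀ t ∈ Icc a b, ‖g t‖ ≤ B t := fun _ ht =>
  image_norm_le_of_norm_deriv_right_le_deriv_boundary
    (fun t ht => (hg t ht).continuousWithinAt)
    (fun t ht => (hg t (Ico_subset_Icc_self ht)).mono_of_mem_nhdsWithin
      (Icc_mem_nhdsGE_of_mem ht))
    ha hB (fun t ht => bound t (Ico_subset_Icc_self ht)) ht

lemma norm_le_mul_pow_succ_div_factorial {T C : ℝ} (n : ℕ)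
    (hg : ∀ t ∈ Icc 0 T, HasDerivWithinAt g (g' t) (Icc 0 T) t) (hg0 : g 0 = 0)
    (bound : ∀ t ∈ Icc 0 T, ‖g' t‖ ≤ C * (t ^ n / n !)) :
    ∀ t ∈ Icc 0 T, ‖g t‖ ≤ C * (t ^ (n + 1) / (n + 1)!) :=
  norm_le_of_hasDerivWithinAt_Icc hg
    (fun t => (hasDerivAt_pow_succ_div_factorial n t).const_mul C) (by simp [hg0]) bound

end Comparison

noncomputable def lieDeriv (f h : ℝ → ℝ) : ℝ → ℝ := fun z => deriv h z * f z

noncomputable def truncLieSeries (f h : ℝ → ℝ) (n : ℕ) (z t : ℝ) : ℝ :=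
  ∑ j ∈ range n, t ^ j / j ! * (lieDeriv f)^[j] h z

lemma truncLieSeries_succ_zero (f h : ℝ → ℝ) (n : ℕ) (z : ℝ) :
    truncLieSeries f h (n + 1) z 0 = h z := by
  simp [truncLieSeries, sum_range_succ']

lemma hasDerivAt_truncLieSeries_succ (f h : ℝ → ℝ) (n : ℕ) (z t : ℝ) :
    HasDerivAt (truncLieSeries f h (n + 1) z) (truncLieSeries f (lieDeriv f h) n z t) t := by
  unfold truncLieSeries
  simp only [sum_range_succ', pow_zero, factorial_zero, cast_one, div_one, one_mul,
    Function.iterate_succ_apply]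
  exact (HasDerivAt.fun_sum fun j _ =>
    (hasDerivAt_pow_succ_div_factorial j t).mul_const _).add_const _

theorem abs_sub_truncLieSeries_le {f x : ℝ → ℝ} {T C : ℝ}
    (hx : ∀ t ∈ Icc 0 T, HasDerivWithinAt x (f (x t)) (Icc 0 T) t) (n : ℕ) (h : ℝ → ℝ)
    (hdiff : ∀ j < n, Differentiable ℝ ((lieDeriv f)^[j] h))
    (hC : ∀ z, |(lieDeriv f)^[n] h z| ≤ C) :
    ∀ t ∈ Icc 0 T, |h (x t) - truncLieSeries f h n (x 0) t| ≤ C * (t ^ n / n !) := by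
  induction n generalizing h with
  | zero => simpa [truncLieSeries] using fun t (_ : t ∈ Icc 0 T) => hC (x t)
  | succ n ih =>
    have hderiv : ∀ t ∈ Icc 0 T, HasDerivWithinAt
        (fun t => h (x t) - truncLieSeries f h (n + 1) (x 0) t)
        (lieDeriv f h (x t) - truncLieSeries f (lieDeriv f h) n (x 0) t) (Icc 0 T) t :=
      fun t ht => ((hdiff 0 n.succ_pos).differentiableAt.hasDerivAt.comp_hasDerivWithinAt t
        (hx t ht)).sub (hasDerivAt_truncLieSeries_succ f h n (x 0) t).hasDerivWithinAt
    have hIH := ih (lieDeriv f h) (fun j hj => hdiff (j + 1) (by omega)) hC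
    simpa only [Real.norm_eq_abs] using norm_le_mul_pow_succ_div_factorial n hderiv
      (by simp [truncLieSeries_succ_zero]) (by simpa only [Real.norm_eq_abs] using hIH)

lemma ContDiff.hasDerivAt_deriv {𝕜 F : Type*} [NontriviallyNormedField 𝕜] [NormedAddCommGroup F]
    [NormedSpace 𝕜 F] {f : 𝕜 → F} (hf : ContDiff 𝕜 2 f) (z : 𝕜) :
    HasDerivAt (deriv f) (iteratedDeriv 2 f z) z := by
  rw [iteratedDeriv_succ, ← iteratedDeriv_one]
  exact (hf.differentiable_iteratedDeriv 1 (by norm_num) z).hasDerivAt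

section LieDerivId

variable {f : ℝ → ℝ}

lemma lieDeriv_id : lieDeriv f id = f := by
  ext z
  simp [lieDeriv]

lemma lieDeriv_self : lieDeriv f f = deriv f * f := rfl

lemma truncLieSeries_three_id (z t : ℝ) :
    truncLieSeries f id 3 z t = z + t * f z + t ^ 2 / 2 * (deriv f z * f z) := by
  simp [truncLieSeries, sum_range_succ, lieDeriv_id, lieDeriv_self]

lemma hasDerivAt_deriv_mul_self (hf : ContDiff ℝ 2 f) (z : ℝ) :
    HasDerivAt (deriv f * f) (iteratedDeriv 2 f z * f z + deriv f z * deriv f z) z :=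
  (hf.hasDerivAt_deriv z).mul ((hf.differentiable (by norm_num)) z).hasDerivAt

lemma differentiable_iterate_lieDeriv_id (hf : ContDiff ℝ 2 f) :
    ∀ j < 3, Differentiable ℝ ((lieDeriv f)^[j] id) := by
  intro j hj
  interval_cases j
  · exact differentiable_id
  · simpa [lieDeriv_id] using hf.differentiable (by norm_num)
  · simpa [lieDeriv_id, lieDeriv_self, Differentiable] using
      fun z => (hasDerivAt_deriv_mul_self hf z).differentiableAt

lemma iterate_three_lieDeriv_id (hf : ContDiff ℝ 2 f) :
    (lieDeriv f)^[3] id =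
      fun z => (iteratedDeriv 2 f z * f z + deriv f z * deriv f z) * f z := by
  ext z
  simp only [Function.iterate_succ_apply', Function.iterate_zero_apply, lieDeriv_id,
    lieDeriv_self]
  rw [lieDeriv, (hasDerivAt_deriv_mul_self hf z).deriv]

lemma abs_iterate_three_lieDeriv_id_le (hf : ContDiff ℝ 2 f) {M₀ M₁ M₂ : ℝ}
    (hf0 : ∀ z, |f z| ≤ M₀) (hf1 : ∀ z, |deriv f z| ≤ M₁)
    (hf2 : ∀ z, |iteratedDeriv 2 f z| ≤ M₂) (z : ℝ) :
    |(lieDeriv f)^[3] id z| ≤ M₀ * (M₀ * M₂ + M₁ ^ 2) := by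
  have hM₀ : 0 ≤ M₀ := (abs_nonneg _).trans (hf0 z)
  have hM₁ : 0 ≤ M₁ := (abs_nonneg _).trans (hf1 z)
  have hM₂ : 0 ≤ M₂ := (abs_nonneg _).trans (hf2 z)
  rw [iterate_three_lieDeriv_id hf]
  calc |(iteratedDeriv 2 f z * f z + deriv f z * deriv f z) * f z|
      ≤ (|iteratedDeriv 2 f z| * |f z| + |deriv f z| * |deriv f z|) * |f z| := by
        rw [abs_mul]
        gcongr
        exact (abs_add_le _ _).trans_eq (by rw [abs_mul, abs_mul])
    _ ≤ (M₂ * M₀ + M₁ * M₁) * M₀ := by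
        gcongr
        exacts [hf2 z, hf0 z, hf1 z, hf1 z, hf0 z]
    _ = M₀ * (M₀ * M₂ + M₁ ^ 2) := by ring

end LieDerivId

/-- Second-order Taylor expansion of the flow of the ODE `x' = f(x)` with explicit
remainder bound: if `|f| ≤ M₀`, `|f'| ≤ M₁`, `|f''| ≤ M₂`, then for `t ∈ [0,T]`,
`|x(t) − x(0) − t f(x(0)) − (t²/2) f(x(0)) f'(x(0))| ≤ M₀(M₀M₂ + M₁²) t³/6`. -/
theorem ode_flow_taylor_expansion
    (f : ℝ → ℝ) (M₀ M₁ M₂ T : ℝ)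
    (hf : ContDiff ℝ 2 f)
    (hf0 : ∀ z, |f z| ≤ M₀)
    (hf1 : ∀ z, |deriv f z| ≤ M₁)
    (hf2 : ∀ z, |iteratedDeriv 2 f z| ≤ M₂)
    (x : ℝ → ℝ)
    (hx : ∀ t ∈ Set.Icc (0 : ℝ) T, HasDerivWithinAt x (f (x t)) (Set.Icc (0 : ℝ) T) t) :
    ∀ t ∈ Set.Icc (0 : ℝ) T,
      |x t - x 0 - t * f (x 0) - (t ^ 2 / 2) * f (x 0) * deriv f (x 0)|
        ≤ M₀ * (M₀ * M₂ + M₁ ^ 2) * t ^ 3 / 6 := by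
  intro t ht
  convert abs_sub_truncLieSeries_le hx 3 id (differentiable_iterate_lieDeriv_id hf)
    (abs_iterate_three_lieDeriv_id_le hf hf0 hf1 hf2) t ht using 2
  · rw [truncLieSeries_three_id, id_eq]
    ring
  · norm_num [factorial, mul_div_assoc]
end

section
/- Let θ > 0, −1/2 < a < 0, h > 0 and c ∈ [0,1], and let ξ ~ N(0,h). Then E[sin²((√(−2aθ)/2)·ξ + arcsin(√c))] = e^{aθh}·c + (1 − e^{aθh})/2. Consequently, for μ ∈ (0,1) with min(μ, 1−μ) ≥ −a, setting θ̃ = (1+a)θ and μ̃ = (2μ+a)/(2(1+a)), the one-step LT scheme for the Wright–Fisher diffusion started at x ∈ (0,1) satisfies E[X^{LT}] = e^{−θh}x + μ̃(e^{aθh} − e^{−θh}) + (1 − e^{aθh})/2. -/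
/-!
Since `sin² y = (1 - cos 2y) / 2`, the mean reduces to `E[cos (2sξ + 2b)] = e^{-2s²h} cos 2b`,
the real part of `e^{2ib}` times the Gaussian characteristic function at `2s`; and
`cos (2 arcsin √c) = 1 - 2c` makes the result affine in `c`. The second identity is the first
at `c = μ̃ + e^{-θ̃h}(x - μ̃)`, which lies in `[0,1]` as a convex combination of `μ̃` and `x`,
together with `e^{aθh} e^{-θ̃h} = e^{-θh}`.
-/

open MeasureTheory ProbabilityTheory Real
open scoped NNReal

lemma integral_cos_mul_add_eq_re_charFun (ν : Measure ℝ) [IsFiniteMeasure ν] (s b : ℝ) :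
    ∫ z, cos (s * z + b) ∂ν = (Complex.exp (b * Complex.I) * charFun ν s).re := by
  have hint : Integrable (fun z : ℝ ↦ Complex.exp (↑(s * z + b) * Complex.I)) ν :=
    .of_bound (by fun_prop) 1 (ae_of_all _ fun z ↦ (Complex.norm_exp_ofReal_mul_I _).le)
  have hexp : ∀ z : ℝ, Complex.exp (↑(s * z + b) * Complex.I)
      = Complex.exp (b * Complex.I) * Complex.exp (s * z * Complex.I) := by
    intro z
    rw [← Complex.exp_add]
    push_cast
    ring_nf
  simp_rw [← Complex.exp_ofReal_mul_I_re (s * _ + b)]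
  rw [charFun_apply_real, ← integral_const_mul, ← funext hexp]
  exact integral_re hint

lemma integral_cos_mul_add_gaussianReal (m : ℝ) (v : ℝ≥0) (s b : ℝ) :
    ∫ z, cos (s * z + b) ∂gaussianReal m v = exp (-(v * s ^ 2) / 2) * cos (s * m + b) := by
  rw [integral_cos_mul_add_eq_re_charFun, charFun_gaussianReal, ← Complex.exp_add,
    show (b : ℂ) * Complex.I + (s * m * Complex.I - v * s ^ 2 / 2)
      = ((-(v * s ^ 2) / 2 : ℝ) : ℂ) + ((s * m + b : ℝ) : ℂ) * Complex.I by push_cast; ring,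
    Complex.exp_add, ← Complex.ofReal_exp, Complex.re_ofReal_mul, Complex.exp_ofReal_mul_I_re]

lemma integral_sin_mul_add_sq_gaussianReal (m : ℝ) (v : ℝ≥0) (s b : ℝ) :
    ∫ z, sin (s * z + b) ^ 2 ∂gaussianReal m v
      = (1 - exp (-(2 * v * s ^ 2)) * cos (2 * (s * m + b))) / 2 := by
  have hcos : Integrable (fun z ↦ cos (2 * s * z + 2 * b)) (gaussianReal m v) :=
    .of_bound (by fun_prop) 1 (ae_of_all _ fun z ↦ abs_cos_le_one _)
  simp_rw [sin_sq_eq_half_sub, show ∀ z, 2 * (s * z + b) = 2 * s * z + 2 * b by intro; ring]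
  rw [integral_sub (integrable_const _) (hcos.div_const 2), integral_const, integral_div,
    integral_cos_mul_add_gaussianReal, probReal_univ, one_smul]
  ring_nf

lemma cos_two_mul_arcsin_sqrt {c : ℝ} (hc : c ∈ Set.Icc 0 1) :
    cos (2 * arcsin √c) = 1 - 2 * c := by
  have hsqrt : √c ≤ 1 := sqrt_le_one.mpr hc.2
  rw [cos_two_mul_eq_one_sub, sin_arcsin (by linarith [sqrt_nonneg c]) hsqrt, sq_sqrt hc.1]

lemma integral_sin_mul_add_arcsin_sqrt_sq_gaussianReal (v : ℝ≥0) (s : ℝ) {c : ℝ}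
    (hc : c ∈ Set.Icc 0 1) :
    ∫ z, sin (s * z + arcsin √c) ^ 2 ∂gaussianReal 0 v
      = exp (-(2 * v * s ^ 2)) * c + (1 - exp (-(2 * v * s ^ 2))) / 2 := by
  rw [integral_sin_mul_add_sq_gaussianReal, mul_zero, zero_add, cos_two_mul_arcsin_sqrt hc]
  ring

theorem wf_LT_one_step_mean_general
    (θ a h c μ x : ℝ) (hθ : 0 < θ) (ha1 : -(1 / 2) < a) (ha2 : a < 0) (hh : 0 < h)
    (hc : c ∈ Set.Icc (0 : ℝ) 1)
    (hμa : -a ≤ μ) (hμa' : -a ≤ 1 - μ)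
    (hx : x ∈ Set.Ioo (0 : ℝ) 1) :
    (∫ z, Real.sin (Real.sqrt (-2 * a * θ) / 2 * z + Real.arcsin (Real.sqrt c)) ^ 2
          ∂(gaussianReal 0 h.toNNReal))
        = Real.exp (a * θ * h) * c + (1 - Real.exp (a * θ * h)) / 2
      ∧ (∫ z, Real.sin (Real.sqrt (-2 * a * θ) / 2 * z
              + Real.arcsin (Real.sqrt
                  ((2 * μ + a) / (2 * (1 + a))
                    + Real.exp (-((1 + a) * θ) * h)
                      * (x - (2 * μ + a) / (2 * (1 + a)))))) ^ 2
            ∂(gaussianReal 0 h.toNNReal))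
          = Real.exp (-θ * h) * x
            + ((2 * μ + a) / (2 * (1 + a)))
                * (Real.exp (a * θ * h) - Real.exp (-θ * h))
            + (1 - Real.exp (a * θ * h)) / 2 := by
  have hvar : -(2 * (h.toNNReal : ℝ) * (√(-2 * a * θ) / 2) ^ 2) = a * θ * h := by
    rw [coe_toNNReal _ hh.le, div_pow, sq_sqrt (by nlinarith)]
    ring
  have hmean : ∀ c ∈ Set.Icc (0 : ℝ) 1,
      ∫ z, sin (√(-2 * a * θ) / 2 * z + arcsin √c) ^ 2 ∂gaussianReal 0 h.toNNReal
        = exp (a * θ * h) * c + (1 - exp (a * θ * h)) / 2 := fun c hc ↦ by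
    rw [integral_sin_mul_add_arcsin_sqrt_sq_gaussianReal _ _ hc, hvar]
  refine ⟨hmean c hc, ?_⟩
  set μ' := (2 * μ + a) / (2 * (1 + a))
  have hμ' : μ' ∈ Set.Icc (0 : ℝ) 1 :=
    ⟨div_nonneg (by linarith) (by linarith), (div_le_one (by linarith)).mpr (by linarith)⟩
  have hdecay : exp (-((1 + a) * θ) * h) ∈ Set.Icc (0 : ℝ) 1 :=
    ⟨(exp_pos _).le, exp_le_one_iff.mpr (by nlinarith [mul_pos hθ hh])⟩
  have hstart : μ' + exp (-((1 + a) * θ) * h) * (x - μ') ∈ Set.Icc (0 : ℝ) 1 := by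
    simpa only [smul_eq_mul] using
      (convex_Icc 0 1).add_smul_sub_mem hμ' (Set.Ioo_subset_Icc_self hx) hdecay
  rw [hmean _ hstart]
  have hexp : exp (a * θ * h) * exp (-((1 + a) * θ) * h) = exp (-θ * h) := by
    rw [← exp_add]; ring_nf
  linear_combination (x - μ') * hexp

/-- One-step conditional mean of the Lie–Trotter scheme for the Wright–Fisher
diffusion: for `ξ ~ N(0,h)` and `c ∈ [0,1]`,
`E[sin²((√(−2aθ)/2) ξ + arcsin √c)] = e^{aθh} c + (1 − e^{aθh})/2`; consequently,
with `θ̃ = (1+a)θ` and `μ̃ = (2μ+a)/(2(1+a))`, the LT scheme started at `x ∈ (0,1)`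
has mean `e^{−θh} x + μ̃(e^{aθh} − e^{−θh}) + (1 − e^{aθh})/2`. -/
theorem wf_LT_one_step_mean
    (θ a h c μ x : ℝ) (hθ : 0 < θ) (ha1 : -(1 / 2) < a) (ha2 : a < 0) (hh : 0 < h)
    (hc : c ∈ Set.Icc (0 : ℝ) 1)
    (hμ0 : 0 < μ) (hμ1 : μ < 1) (hμa : -a ≤ μ) (hμa' : -a ≤ 1 - μ)
    (hx : x ∈ Set.Ioo (0 : ℝ) 1) :
    (∫ z, Real.sin (Real.sqrt (-2 * a * θ) / 2 * z + Real.arcsin (Real.sqrt c)) ^ 2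
          ∂(gaussianReal 0 h.toNNReal))
        = Real.exp (a * θ * h) * c + (1 - Real.exp (a * θ * h)) / 2
      ∧ (∫ z, Real.sin (Real.sqrt (-2 * a * θ) / 2 * z
              + Real.arcsin (Real.sqrt
                  ((2 * μ + a) / (2 * (1 + a))
                    + Real.exp (-((1 + a) * θ) * h)
                      * (x - (2 * μ + a) / (2 * (1 + a)))))) ^ 2
            ∂(gaussianReal 0 h.toNNReal))
          = Real.exp (-θ * h) * x
            + ((2 * μ + a) / (2 * (1 + a)))
                * (Real.exp (a * θ * h) - Real.exp (-θ * h))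
            + (1 - Real.exp (a * θ * h)) / 2 :=
  wf_LT_one_step_mean_general θ a h c μ x hθ ha1 ha2 hh hc hμa hμa' hx
end

section
/- Let θ > 0, a > 0, h > 0 and c ∈ ℝ, and let ξ ~ N(0,h). Then E[sinh(√(2θa)·ξ + arcsinh(c))] = c·e^{θah}. Consequently, setting θ̃ = (1+a)θ and μ̃ = μ/(1+a), the one-step LT scheme for the Student diffusion started at x ∈ ℝ, namely X^{LT} = sinh(√(2θa)·ξ + arcsinh(μ̃ + e^{−θ̃h}(x − μ̃))), satisfies E[X^{LT}] = e^{−θh}x + μ̃(e^{θah} − e^{−θh}). -/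
/-! Writing `sinh (σ z + b)` as a combination of `e^{σ z}` and `e^{-σ z}`, its Gaussian mean
follows from the moment generating function `E[e^{tξ}] = e^{v t² / 2}`, giving
`sinh b · e^{v σ² / 2}`. With `b = arsinh c` and `σ² = 2θa` this is `c e^{θah}`; the LT mean
then follows from `e^{-θ̃h} e^{θah} = e^{-θh}`. -/

open MeasureTheory ProbabilityTheory
open scoped NNReal

lemma integral_exp_mul_gaussianReal (μ : ℝ) (v : ℝ≥0) (t : ℝ) :
    ∫ x, Real.exp (t * x) ∂(gaussianReal μ v) = Real.exp (μ * t + v * t ^ 2 / 2) :=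
  congrFun mgf_fun_id_gaussianReal t

lemma integral_sinh_mul_add_gaussianReal (μ : ℝ) (v : ℝ≥0) (σ b : ℝ) :
    ∫ x, Real.sinh (σ * x + b) ∂(gaussianReal μ v)
      = Real.sinh (σ * μ + b) * Real.exp (v * σ ^ 2 / 2) := by
  have hsplit : (fun x ↦ Real.sinh (σ * x + b)) = fun x ↦
      Real.exp b / 2 * Real.exp (σ * x) - Real.exp (-b) / 2 * Real.exp (-σ * x) := by
    ext x
    rw [Real.sinh_eq, neg_add, neg_mul, Real.exp_add, Real.exp_add]
    ring
  rw [hsplit, integral_sub ((integrable_exp_mul_gaussianReal σ).const_mul _)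
      ((integrable_exp_mul_gaussianReal (-σ)).const_mul _),
    integral_const_mul, integral_const_mul, integral_exp_mul_gaussianReal,
    integral_exp_mul_gaussianReal, Real.sinh_eq, neg_add, ← neg_mul, neg_sq,
    Real.exp_add, Real.exp_add, Real.exp_add, Real.exp_add, mul_neg, neg_mul, mul_comm μ σ]
  ring

/-- One-step conditional mean of the Lie–Trotter scheme for the Student diffusion:
for `ξ ~ N(0,h)` and `c ∈ ℝ`, `E[sinh(√(2θa) ξ + arcsinh c)] = c e^{θah}`;
consequently, with `θ̃ = (1+a)θ` and `μ̃ = μ/(1+a)`, the LT scheme started at `x ∈ ℝ`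
has mean `e^{−θh} x + μ̃(e^{θah} − e^{−θh})`. -/
theorem student_LT_one_step_mean
    (θ a h c μ x : ℝ) (hθ : 0 < θ) (ha : 0 < a) (hh : 0 < h) :
    (∫ z, Real.sinh (Real.sqrt (2 * θ * a) * z + Real.arsinh c)
          ∂(gaussianReal 0 h.toNNReal))
        = c * Real.exp (θ * a * h)
      ∧ (∫ z, Real.sinh (Real.sqrt (2 * θ * a) * z
              + Real.arsinh (μ / (1 + a)
                  + Real.exp (-((1 + a) * θ) * h) * (x - μ / (1 + a))))
            ∂(gaussianReal 0 h.toNNReal))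
          = Real.exp (-θ * h) * x
            + (μ / (1 + a)) * (Real.exp (θ * a * h) - Real.exp (-θ * h)) := by
  have hmean : ∀ y : ℝ, ∫ z, Real.sinh (Real.sqrt (2 * θ * a) * z + Real.arsinh y)
      ∂(gaussianReal 0 h.toNNReal) = y * Real.exp (θ * a * h) := by
    intro y
    rw [integral_sinh_mul_add_gaussianReal, mul_zero, zero_add, Real.sinh_arsinh,
      Real.sq_sqrt (by positivity), Real.coe_toNNReal h hh.le]
    congr 2
    ring
  refine ⟨hmean c, ?_⟩
  have hexp : Real.exp (-((1 + a) * θ) * h) * Real.exp (θ * a * h) = Real.exp (-θ * h) := by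
    rw [← Real.exp_add]
    congr 1
    ring
  rw [hmean]
  linear_combination (x - μ / (1 + a)) * hexp
end
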